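/- arXiv:1205.0044 — 9 statements merged into one kernel-verified Lean document; each statement's English description precedes it below -/
import Mathlib

section
/- If M₁ and M₂ are nonnegative matrices and M is the block-diagonal matrix with blocks M₁ and M₂ (and zeros elsewhere), then rank⁺(M) = rank⁺(M₁) + rank⁺(M₂). -/
/-!
Given nonnegative factors `A`, `W` of `fromBlocks M₁ 0 0 M₂`, every term `A (inl i) k * W k (inr j)`
of a zero entry is nonnegative, hence zero. So each inner index `k` whose column of `A` meets the
first row block has a row of `W` vanishing on the second column block. Splitting the inner indices
accordingly factors `M₁` and `M₂` separately, so the inner dimension is at least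
`nrank M₁ + nrank M₂`. The reverse inequality comes from the block-diagonal factorization.
-/

/-- The nonnegative rank of a real matrix: the smallest `r` such that `M = A * W`
with `A`, `W` entrywise nonnegative of inner dimension `r`. -/
noncomputable def nrank {m n : Type*} [Fintype m] [Fintype n]
    (M : Matrix m n ℝ) : ℕ :=
  sInf {r : ℕ | ∃ (A : Matrix m (Fin r) ℝ) (W : Matrix (Fin r) n ℝ),
    (∀ i k, 0 ≤ A i k) ∧ (∀ k j, 0 ≤ W k j) ∧ M = A * W}

open Matrix

theorem Matrix.mul_apply_eq_zero_iff_of_nonneg {m n ι : Type*} [Fintype ι]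
    {A : Matrix m ι ℝ} {W : Matrix ι n ℝ} (hA : ∀ i k, 0 ≤ A i k) (hW : ∀ k j, 0 ≤ W k j)
    (i : m) (j : n) : (A * W) i j = 0 ↔ ∀ k, A i k * W k j = 0 := by
  rw [mul_apply, Finset.sum_eq_zero_iff_of_nonneg fun k _ => mul_nonneg (hA i k) (hW k j)]
  simp

theorem Matrix.mul_eq_submatrix_mul_submatrix {m n ι α : Type*} [Fintype ι]
    [NonUnitalNonAssocSemiring α] {A : Matrix m ι α} {W : Matrix ι n α} (p : ι → Prop)
    [DecidablePred p] (h : ∀ i j k, A i k * W k j ≠ 0 → p k) :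
    A * W = A.submatrix id (Subtype.val : Subtype p → ι) *
      W.submatrix (Subtype.val : Subtype p → ι) id := by
  ext i j
  simp only [mul_apply, submatrix_apply, id]
  rw [← Finset.sum_subtype (Finset.univ.filter p) (by simp) (fun k => A i k * W k j),
    Finset.sum_filter_of_ne fun k _ => h i j k]

theorem Matrix.fromBlocks_nonneg {m₁ m₂ n₁ n₂ : Type*} {A : Matrix m₁ n₁ ℝ} {B : Matrix m₁ n₂ ℝ}
    {C : Matrix m₂ n₁ ℝ} {D : Matrix m₂ n₂ ℝ} (hA : ∀ i j, 0 ≤ A i j) (hB : ∀ i j, 0 ≤ B i j)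
    (hC : ∀ i j, 0 ≤ C i j) (hD : ∀ i j, 0 ≤ D i j) :
    ∀ i j, 0 ≤ fromBlocks A B C D i j := by
  rintro (i | i) (j | j)
  exacts [hA i j, hB i j, hC i j, hD i j]

section NonnegRank

variable {m n ι : Type*} [Fintype ι]

theorem exists_fin_card_nonneg_factorization {M : Matrix m n ℝ} {A : Matrix m ι ℝ}
    {W : Matrix ι n ℝ} (hA : ∀ i k, 0 ≤ A i k) (hW : ∀ k j, 0 ≤ W k j) (hM : M = A * W) :
    ∃ (A' : Matrix m (Fin (Fintype.card ι)) ℝ) (W' : Matrix (Fin (Fintype.card ι)) n ℝ),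
      (∀ i k, 0 ≤ A' i k) ∧ (∀ k j, 0 ≤ W' k j) ∧ M = A' * W' := by
  let e := (Fintype.equivFin ι).symm
  refine ⟨A.submatrix id e, W.submatrix e id, fun i k => hA _ _, fun k j => hW _ _, ?_⟩
  rw [submatrix_mul_equiv, hM, submatrix_id_id]

variable [Fintype m] [Fintype n]

theorem nrank_le_card {M : Matrix m n ℝ} {A : Matrix m ι ℝ} {W : Matrix ι n ℝ}
    (hA : ∀ i k, 0 ≤ A i k) (hW : ∀ k j, 0 ≤ W k j) (hM : M = A * W) :
    nrank M ≤ Fintype.card ι :=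
  Nat.sInf_le (exists_fin_card_nonneg_factorization hA hW hM)

theorem exists_nonneg_factorization_nrank {M : Matrix m n ℝ} (hM : ∀ i j, 0 ≤ M i j) :
    ∃ (A : Matrix m (Fin (nrank M)) ℝ) (W : Matrix (Fin (nrank M)) n ℝ),
      (∀ i k, 0 ≤ A i k) ∧ (∀ k j, 0 ≤ W k j) ∧ M = A * W := by
  classical
  have hone : ∀ k j, 0 ≤ (1 : Matrix n n ℝ) k j := fun k j => by
    rw [one_apply]; split_ifs <;> norm_num
  exact Nat.sInf_mem (s := {r | ∃ (A : Matrix m (Fin r) ℝ) (W : Matrix (Fin r) n ℝ),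
    (∀ i k, 0 ≤ A i k) ∧ (∀ k j, 0 ≤ W k j) ∧ M = A * W})
    ⟨_, exists_fin_card_nonneg_factorization hM hone (Matrix.mul_one M).symm⟩

variable {m₁ m₂ n₁ n₂ : Type*} [Fintype m₁] [Fintype m₂] [Fintype n₁] [Fintype n₂]

theorem nrank_fromBlocks_le {M₁ : Matrix m₁ n₁ ℝ} {M₂ : Matrix m₂ n₂ ℝ}
    (hM₁ : ∀ i j, 0 ≤ M₁ i j) (hM₂ : ∀ i j, 0 ≤ M₂ i j) :
    nrank (fromBlocks M₁ 0 0 M₂) ≤ nrank M₁ + nrank M₂ := by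
  obtain ⟨A₁, W₁, hA₁, hW₁, h₁⟩ := exists_nonneg_factorization_nrank hM₁
  obtain ⟨A₂, W₂, hA₂, hW₂, h₂⟩ := exists_nonneg_factorization_nrank hM₂
  have hA : ∀ i k, 0 ≤ fromBlocks A₁ 0 0 A₂ i k :=
    fromBlocks_nonneg hA₁ (fun _ _ => le_rfl) (fun _ _ => le_rfl) hA₂
  have hW : ∀ k j, 0 ≤ fromBlocks W₁ 0 0 W₂ k j :=
    fromBlocks_nonneg hW₁ (fun _ _ => le_rfl) (fun _ _ => le_rfl) hW₂
  have h : fromBlocks M₁ 0 0 M₂ = fromBlocks A₁ 0 0 A₂ * fromBlocks W₁ 0 0 W₂ := by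
    rw [fromBlocks_multiply]; simp [h₁, h₂]
  simpa using nrank_le_card hA hW h

theorem add_nrank_le_card_of_fromBlocks_eq_mul {M₁ : Matrix m₁ n₁ ℝ} {M₂ : Matrix m₂ n₂ ℝ}
    {A : Matrix (m₁ ⊕ m₂) ι ℝ} {W : Matrix ι (n₁ ⊕ n₂) ℝ}
    (hA : ∀ i k, 0 ≤ A i k) (hW : ∀ k j, 0 ≤ W k j) (h : fromBlocks M₁ 0 0 M₂ = A * W) :
    nrank M₁ + nrank M₂ ≤ Fintype.card ι := by
  classical
  let S : ι → Prop := fun k => ∃ i, A (.inl i) k ≠ 0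
  have hoff : ∀ i j k, A (.inl i) k * W k (.inr j) = 0 := fun i j =>
    (mul_apply_eq_zero_iff_of_nonneg hA hW _ _).1 (by rw [← h]; rfl)
  have h₁ : M₁ = A.submatrix .inl id * W.submatrix id .inl := by
    rw [← toBlocks_fromBlocks₁₁ M₁ 0 0 M₂, h]
    exact submatrix_mul _ _ _ _ _ Function.bijective_id
  have h₂ : M₂ = A.submatrix .inr id * W.submatrix id .inr := by
    rw [← toBlocks_fromBlocks₂₂ M₁ 0 0 M₂, h]
    exact submatrix_mul _ _ _ _ _ Function.bijective_id
  have hle₁ : nrank M₁ ≤ Fintype.card (Subtype S) := by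
    exact nrank_le_card (fun _ _ => hA _ _) (fun _ _ => hW _ _)
      (h₁.trans (mul_eq_submatrix_mul_submatrix S fun i _ k hk => ⟨i, left_ne_zero_of_mul hk⟩))
  have hle₂ : nrank M₂ ≤ Fintype.card {k // ¬ S k} := by
    refine nrank_le_card (fun _ _ => hA _ _) (fun _ _ => hW _ _)
      (h₂.trans (mul_eq_submatrix_mul_submatrix (¬ S ·) fun _ j k hk ⟨i, hi⟩ => ?_))
    exact right_ne_zero_of_mul hk ((mul_eq_zero.1 (hoff i j k)).resolve_left hi)
  calc nrank M₁ + nrank M₂ ≤ Fintype.card (Subtype S) + Fintype.card {k // ¬ S k} :=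
        add_le_add hle₁ hle₂
    _ = Fintype.card ι := by rw [← Fintype.card_sum, Fintype.card_congr (Equiv.sumCompl S)]

theorem nrank_fromBlocks {M₁ : Matrix m₁ n₁ ℝ} {M₂ : Matrix m₂ n₂ ℝ}
    (hM₁ : ∀ i j, 0 ≤ M₁ i j) (hM₂ : ∀ i j, 0 ≤ M₂ i j) :
    nrank (fromBlocks M₁ 0 0 M₂) = nrank M₁ + nrank M₂ := by
  refine le_antisymm (nrank_fromBlocks_le hM₁ hM₂) ?_
  have hM : ∀ i j, 0 ≤ fromBlocks M₁ 0 0 M₂ i j :=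
    fromBlocks_nonneg hM₁ (fun _ _ => le_rfl) (fun _ _ => le_rfl) hM₂
  obtain ⟨A, W, hA, hW, h⟩ := exists_nonneg_factorization_nrank hM
  simpa using add_nrank_le_card_of_fromBlocks_eq_mul hA hW h

end NonnegRank

/-- nonnegative rank is additive under block-diagonal sums. -/
theorem stmt_4 {m₁ n₁ m₂ n₂ : ℕ}
    (M₁ : Matrix (Fin m₁) (Fin n₁) ℝ) (M₂ : Matrix (Fin m₂) (Fin n₂) ℝ)
    (hM₁ : ∀ i j, 0 ≤ M₁ i j) (hM₂ : ∀ i j, 0 ≤ M₂ i j) :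
    nrank (Matrix.fromBlocks M₁ 0 0 M₂) = nrank M₁ + nrank M₂ :=
  nrank_fromBlocks hM₁ hM₂
end

section
/- Let M = AW be a stable nonnegative matrix factorization. Then for every column index i, the support of the column Wᵢ corresponds to a linearly independent set of columns of A. -/
/-!
If the columns of `A` on the support of `Wᵢ` were linearly dependent, a dependence with a
positive coefficient could be subtracted from `Wᵢ` with the largest step keeping all entries
nonnegative; this kills one entry and exhibits `Mᵢ` in the cone of fewer columns (conic
Carathéodory). But stability forces the support of `Wᵢ`, which is itself admissible, to sit
inside the first admissible subset, hence to have the least possible cardinality.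
-/

open scoped Classical

/-- A subset `S` of column indices of `A` is admissible for a vector `v` if `v` lies in
the conical hull of the columns of `A` indexed by `S`. -/
def Admissible {m r : ℕ} (A : Matrix (Fin m) (Fin r) ℝ) (v : Fin m → ℝ)
    (S : Finset (Fin r)) : Prop :=
  ∃ α : Fin r → ℝ, (∀ k, 0 ≤ α k) ∧ (∀ k, k ∉ S → α k = 0) ∧
    ∀ j, v j = ∑ k : Fin r, α k * A j k

/-- Encoding of a subset of `Fin r` giving larger weight to smaller indices, so that
among subsets of equal cardinality, lexicographically earlier subsets get larger codes. -/
def subsetCode {r : ℕ} (S : Finset (Fin r)) : ℕ := ∑ i ∈ S, 2 ^ (r - 1 - (i : ℕ))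

/-- The order on subsets of `[r]`: smaller cardinality first, ties broken
lexicographically (as increasing sequences of indices). -/
def SubsetLt {r : ℕ} (S T : Finset (Fin r)) : Prop :=
  S.card < T.card ∨ (S.card = T.card ∧ subsetCode T < subsetCode S)

/-- `S` is the (lexicographically) first admissible subset for `v`. -/
def IsFirstAdmissible {m r : ℕ} (A : Matrix (Fin m) (Fin r) ℝ) (v : Fin m → ℝ)
    (S : Finset (Fin r)) : Prop :=
  Admissible A v S ∧ ∀ T, Admissible A v T → T ≠ S → SubsetLt S T

/-- A nonnegative matrix factorization `M = A * W` is stable if every column of `W` is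
supported in the first admissible subset of columns of `A` for the corresponding column
of `M`, and every row of `A` is supported in the first admissible subset of rows of `W`
for the corresponding row of `M`. -/
def Stable {m n r : ℕ} (M : Matrix (Fin m) (Fin n) ℝ)
    (A : Matrix (Fin m) (Fin r) ℝ) (W : Matrix (Fin r) (Fin n) ℝ) : Prop :=
  (∀ i : Fin n, ∃ S : Finset (Fin r),
      IsFirstAdmissible A (fun j => M j i) S ∧ ∀ k, W k i ≠ 0 → k ∈ S) ∧
  (∀ j : Fin m, ∃ T : Finset (Fin r),
      IsFirstAdmissible W.transpose (fun i => M j i) T ∧ ∀ k, A j k ≠ 0 → k ∈ T)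

open Matrix

section ConicCaratheodory

variable {m r : ℕ} {A : Matrix (Fin m) (Fin r) ℝ} {v : Fin m → ℝ}

theorem admissible_of_mulVec_eq {α : Fin r → ℝ} {S : Finset (Fin r)} (hα : 0 ≤ α)
    (hS : ∀ k ∉ S, α k = 0) (hv : v = A *ᵥ α) : Admissible A v S :=
  ⟨α, hα, hS, fun j => by simp only [hv, mulVec, dotProduct, mul_comm]⟩

theorem IsFirstAdmissible.card_le {S T : Finset (Fin r)} (hS : IsFirstAdmissible A v S)
    (hT : Admissible A v T) : S.card ≤ T.card := by
  by_cases hTS : T = S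
  · rw [hTS]
  · rcases hS.2 T hT hTS with hlt | ⟨heq, -⟩ <;> omega

theorem exists_pos_mulVec_eq_zero_of_not_linearIndependent {ι κ : Type*} [Fintype κ]
    {B : Matrix ι κ ℝ} {p : κ → Prop} [DecidablePred p]
    (h : ¬LinearIndependent ℝ (fun k : {k // p k} => fun j => B j k.1)) :
    ∃ c : κ → ℝ, (∀ k, ¬p k → c k = 0) ∧ B *ᵥ c = 0 ∧ ∃ k, 0 < c k := by
  obtain ⟨g, hg, k, hk⟩ := Fintype.not_linearIndependent_iff.1 h
  set c : κ → ℝ := fun k => if hk : p k then g ⟨k, hk⟩ else 0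
  have hc : ∀ k, ¬p k → c k = 0 := fun k hk => dif_neg hk
  have hBc : B *ᵥ c = 0 := by
    ext j
    have hon : ∀ k : {k // p k}, B j k * c k = g k * B j k := fun k => by simp [c, k.2, mul_comm]
    have hoff : ∀ k : {k // ¬p k}, B j k * c k = 0 := fun k => by simp [c, k.2]
    rw [mulVec, dotProduct, ← Fintype.sum_subtype_add_sum_subtype p, Fintype.sum_congr _ _ hon,
      Fintype.sum_congr _ _ hoff, Finset.sum_const_zero, add_zero]
    simpa using congrFun hg j
  rcases (show c k ≠ 0 by simpa [c, k.2] using hk).lt_or_gt with hneg | hpos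
  · exact ⟨-c, fun k hk' => by simp [hc k hk'], by rw [mulVec_neg, hBc, neg_zero],
      k, neg_pos.2 hneg⟩
  · exact ⟨c, hc, hBc, k, hpos⟩

theorem exists_admissible_erase_of_mulVec_eq_zero {α c : Fin r → ℝ} (hα : 0 ≤ α)
    (hv : v = A *ᵥ α) (hc : ∀ k, α k = 0 → c k = 0) (hAc : A *ᵥ c = 0)
    (hpos : ∃ k, 0 < c k) :
    ∃ k, α k ≠ 0 ∧ Admissible A v (({k | α k ≠ 0} : Finset (Fin r)).erase k) := by
  obtain ⟨k₁, hk₁⟩ := hpos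
  obtain ⟨k₀, hk₀, hmin⟩ := Finset.exists_min_image {k | 0 < c k} (fun k => α k / c k)
    ⟨k₁, by simpa using hk₁⟩
  have hck₀ : 0 < c k₀ := by simpa using hk₀
  have hαk₀ : α k₀ ≠ 0 := fun h => hck₀.ne' (hc k₀ h)
  -- the largest multiple of `c` that can be subtracted from `α` keeping it nonnegative
  set t := α k₀ / c k₀
  have ht : 0 ≤ t := div_nonneg (hα k₀) hck₀.le
  refine ⟨k₀, hαk₀, admissible_of_mulVec_eq (α := α - t • c) (fun k => ?_) (fun k hk => ?_) ?_⟩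
  · have : t * c k ≤ α k := by
      rcases le_or_gt (c k) 0 with hck | hck
      · exact (mul_nonpos_of_nonneg_of_nonpos ht hck).trans (hα k)
      · exact (le_div_iff₀ hck).1 (hmin k (by simpa using hck))
    simpa using this
  · by_cases hkk₀ : k = k₀
    · simp [hkk₀, t, div_mul_cancel₀ _ hck₀.ne']
    · have hαk : α k = 0 := by simpa [hkk₀] using hk
      simp [hαk, hc k hαk]
  · rw [mulVec_sub, mulVec_smul, hAc, smul_zero, sub_zero, hv]

theorem linearIndependent_cols_of_forall_admissible_card_le {α : Fin r → ℝ} (hα : 0 ≤ α)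
    (hv : v = A *ᵥ α)
    (hmin : ∀ T, Admissible A v T → ({k | α k ≠ 0} : Finset (Fin r)).card ≤ T.card) :
    LinearIndependent ℝ (fun k : {k // α k ≠ 0} => fun j => A j k.1) := by
  by_contra hdep
  obtain ⟨c, hc, hAc, hpos⟩ := exists_pos_mulVec_eq_zero_of_not_linearIndependent hdep
  obtain ⟨k, hk, hadm⟩ :=
    exists_admissible_erase_of_mulVec_eq_zero hα hv (fun k => by simpa using hc k) hAc hpos
  have hle := hmin _ hadm
  rw [Finset.card_erase_of_mem (by simpa using hk)] at hle
  have hne : 0 < ({k | α k ≠ 0} : Finset (Fin r)).card := Finset.card_pos.2 ⟨k, by simpa using hk⟩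
  omega

end ConicCaratheodory

theorem stmt_6_general {m n r : ℕ} (M : Matrix (Fin m) (Fin n) ℝ)
    (A : Matrix (Fin m) (Fin r) ℝ) (W : Matrix (Fin r) (Fin n) ℝ)
    (hW : ∀ k j, 0 ≤ W k j) (hfac : M = A * W)
    (hstable : Stable M A W) (i : Fin n) :
    LinearIndependent ℝ (fun k : {k : Fin r // W k i ≠ 0} => fun j : Fin m => A j k.1) := by
  have hWi : 0 ≤ fun k => W k i := fun k => hW k i
  have hv : (fun j => M j i) = A *ᵥ fun k => W k i := by
    ext j
    simp only [hfac, mul_apply, mulVec, dotProduct]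
  obtain ⟨S, hS, hsupp⟩ := hstable.1 i
  refine linearIndependent_cols_of_forall_admissible_card_le hWi hv fun T hT => ?_
  calc ({k | W k i ≠ 0} : Finset (Fin r)).card
      ≤ S.card := Finset.card_le_card fun k hk => hsupp k (by simpa using hk)
    _ ≤ T.card := hS.card_le hT

/-- in a stable nonnegative factorization M = A * W, the support of each
column Wᵢ corresponds to a linearly independent set of columns of A. -/
theorem stmt_6 {m n r : ℕ} (M : Matrix (Fin m) (Fin n) ℝ)
    (A : Matrix (Fin m) (Fin r) ℝ) (W : Matrix (Fin r) (Fin n) ℝ)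
    (hA : ∀ i k, 0 ≤ A i k) (hW : ∀ k j, 0 ≤ W k j) (hfac : M = A * W)
    (hstable : Stable M A W) (i : Fin n) :
    LinearIndependent ℝ (fun k : {k : Fin r // W k i ≠ 0} => fun j : Fin m => A j k.1) :=
  stmt_6_general M A W hW hfac hstable i
end

section
/- Every nonnegative matrix factorization M = AW of inner dimension r can be transformed into a stable nonnegative matrix factorization M = Ã W̃ of the same inner dimension r, with Ã and W̃ nonnegative. -/
/-!
Measure a nonnegative factorization `M = A * W` by summing, over the columns of `W` and the
rows of `A`, the rank of their supports in the order on subsets. If a column of `W` is not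
supported in the first admissible set `S` for the corresponding column of `M`, replace it by
the coefficients of a conic combination of the columns of `A` indexed by `S`: the product is
unchanged, and the rank of that support drops, since `S` precedes every other admissible set
and no subset of `S` comes after it. Rows of `A` are handled the same way after transposing.
Hence a nonnegative factorization of `M` of minimal measure is stable.
-/

open scoped Classical

section SubsetOrder

variable {r : ℕ}

lemma subsetCode_eq_sum_image (S : Finset (Fin r)) :
    subsetCode S = ∑ k ∈ S.image (fun i : Fin r => r - 1 - (i : ℕ)), 2 ^ k := by
  refine (Finset.sum_image fun x _ y _ h => Fin.ext ?_).symm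
  have := x.2; have := y.2; omega

lemma subsetCode_injective : Function.Injective (subsetCode (r := r)) := by
  intro S T h
  rw [subsetCode_eq_sum_image, subsetCode_eq_sum_image] at h
  refine Finset.image_injective (fun x y h => Fin.ext ?_) (Finset.geomSum_injective le_rfl h)
  have := x.2; have := y.2; omega

lemma subsetCode_lt_two_pow (S : Finset (Fin r)) : subsetCode S < 2 ^ r := by
  rw [subsetCode_eq_sum_image]
  refine Nat.geomSum_lt le_rfl fun k hk => ?_
  obtain ⟨i, -, rfl⟩ := Finset.mem_image.1 hk
  have := i.2; omega

/-- The cardinality is the leading digit in base `2 ^ r`, so that `SubsetLt` increases the rank. -/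
def subsetRank (S : Finset (Fin r)) : ℕ :=
  S.card * 2 ^ r + (2 ^ r - 1 - subsetCode S)

lemma SubsetLt.subsetRank_lt {S T : Finset (Fin r)} (h : SubsetLt S T) :
    subsetRank S < subsetRank T := by
  have := subsetCode_lt_two_pow S
  have := subsetCode_lt_two_pow T
  rcases h with hcard | ⟨hcard, hcode⟩
  · calc subsetRank S < (S.card + 1) * 2 ^ r := by unfold subsetRank; rw [add_mul]; omega
      _ ≤ T.card * 2 ^ r := Nat.mul_le_mul_right _ hcard
      _ ≤ subsetRank T := Nat.le_add_right _ _
  · unfold subsetRank; rw [hcard]; omega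

lemma subsetRank_le_of_subset {S T : Finset (Fin r)} (h : S ⊆ T) :
    subsetRank S ≤ subsetRank T := by
  rcases (Finset.card_le_card h).eq_or_lt with hcard | hcard
  · rw [Finset.eq_of_subset_of_card_le h hcard.ge]
  · exact (SubsetLt.subsetRank_lt (Or.inl hcard)).le

lemma subsetLt_or_subsetLt_of_ne {S T : Finset (Fin r)} (h : S ≠ T) :
    SubsetLt S T ∨ SubsetLt T S := by
  rcases lt_trichotomy S.card T.card with hcard | hcard | hcard
  · exact Or.inl (Or.inl hcard)
  · rcases (subsetCode_injective.ne h).lt_or_gt with hcode | hcode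
    · exact Or.inr (Or.inr ⟨hcard.symm, hcode⟩)
    · exact Or.inl (Or.inr ⟨hcard, hcode⟩)
  · exact Or.inr (Or.inl hcard)

end SubsetOrder

section Admissible

variable {m r : ℕ} {A : Matrix (Fin m) (Fin r) ℝ} {v : Fin m → ℝ}

lemma exists_isFirstAdmissible {S₀ : Finset (Fin r)} (h : Admissible A v S₀) :
    ∃ S, IsFirstAdmissible A v S := by
  obtain ⟨S, hS, hmin⟩ := Finset.exists_min_image
    (Finset.univ.filter (Admissible A v)) subsetRank ⟨S₀, by simpa using h⟩
  refine ⟨S, (Finset.mem_filter.1 hS).2, fun T hT hTS => ?_⟩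
  refine (subsetLt_or_subsetLt_of_ne hTS.symm).resolve_right fun hlt => ?_
  exact (hlt.subsetRank_lt.trans_le (hmin T (by simpa using hT))).false

lemma IsFirstAdmissible.exists_subsetRank_lt {S T : Finset (Fin r)}
    (hS : IsFirstAdmissible A v S) (hT : Admissible A v T) (hTS : T ≠ S) :
    ∃ α : Fin r → ℝ, (∀ k, 0 ≤ α k) ∧ v = A.mulVec α ∧
      subsetRank (Function.support α).toFinset < subsetRank T := by
  obtain ⟨α, hα, hαS, hv⟩ := hS.1
  refine ⟨α, hα, funext fun j => (hv j).trans ?_, ?_⟩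
  · simp only [Matrix.mulVec, dotProduct, mul_comm]
  · have hsupp : (Function.support α).toFinset ⊆ S := fun k hk => by
      by_contra hkS; exact (Set.mem_toFinset.1 hk) (hαS k hkS)
    exact (subsetRank_le_of_subset hsupp).trans_lt (hS.2 T hT hTS).subsetRank_lt

end Admissible

section Factorization

open Matrix

variable {m n r : ℕ}

noncomputable def colSupportRank (W : Matrix (Fin r) (Fin n) ℝ) : ℕ :=
  ∑ i, subsetRank (Function.support fun k => W k i).toFinset

noncomputable def supportRank (A : Matrix (Fin m) (Fin r) ℝ) (W : Matrix (Fin r) (Fin n) ℝ) :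
    ℕ :=
  colSupportRank W + colSupportRank Aᵀ

def ColumnsStable (M : Matrix (Fin m) (Fin n) ℝ) (A : Matrix (Fin m) (Fin r) ℝ)
    (W : Matrix (Fin r) (Fin n) ℝ) : Prop :=
  ∀ i, ∃ S, IsFirstAdmissible A (fun j => M j i) S ∧ ∀ k, W k i ≠ 0 → k ∈ S

lemma stable_iff {M : Matrix (Fin m) (Fin n) ℝ} {A : Matrix (Fin m) (Fin r) ℝ}
    {W : Matrix (Fin r) (Fin n) ℝ} :
    Stable M A W ↔ ColumnsStable M A W ∧ ColumnsStable Mᵀ Wᵀ Aᵀ :=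
  Iff.rfl

variable {A : Matrix (Fin m) (Fin r) ℝ} {W : Matrix (Fin r) (Fin n) ℝ}

lemma admissible_support_col (hW : ∀ k j, 0 ≤ W k j) (i : Fin n) :
    Admissible A (fun j => (A * W) j i) (Function.support fun k => W k i).toFinset := by
  refine ⟨fun k => W k i, fun k => hW k i, fun k hk => ?_, fun j => ?_⟩
  · simpa using hk
  · simp only [mul_apply, mul_comm]

lemma colSupportRank_updateCol_lt {i : Fin n} {α : Fin r → ℝ}
    (h : subsetRank (Function.support α).toFinset <
      subsetRank (Function.support fun k => W k i).toFinset) :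
    colSupportRank (W.updateCol i α) < colSupportRank W := by
  refine Finset.sum_lt_sum (fun i' _ => ?_) ⟨i, Finset.mem_univ _, ?_⟩
  · rcases eq_or_ne i' i with rfl | hi
    · simpa only [updateCol_self] using h.le
    · simp only [updateCol_ne hi, le_refl]
  · simpa only [updateCol_self] using h

lemma exists_colSupportRank_lt (hW : ∀ k j, 0 ≤ W k j) (h : ¬ ColumnsStable (A * W) A W) :
    ∃ W' : Matrix (Fin r) (Fin n) ℝ,
      (∀ k j, 0 ≤ W' k j) ∧ A * W' = A * W ∧ colSupportRank W' < colSupportRank W := by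
  simp only [ColumnsStable, not_forall, not_exists, not_and] at h
  obtain ⟨i, hi⟩ := h
  have hadm := admissible_support_col (A := A) hW i
  obtain ⟨S, hS⟩ := exists_isFirstAdmissible hadm
  obtain ⟨k, hk, hkS⟩ := hi S hS
  obtain ⟨α, hα, hv, hlt⟩ :=
    hS.exists_subsetRank_lt hadm fun hSupp => hkS (hSupp ▸ by simpa using hk)
  refine ⟨W.updateCol i α, fun k j => ?_, ?_, colSupportRank_updateCol_lt hlt⟩
  · rw [updateCol_apply]
    split_ifs
    exacts [hα k, hW k j]
  · rw [mul_updateCol, ← hv, updateCol_eq_self]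

lemma exists_supportRank_lt_of_not_stable (hA : ∀ i k, 0 ≤ A i k) (hW : ∀ k j, 0 ≤ W k j)
    (h : ¬ Stable (A * W) A W) :
    ∃ (A' : Matrix (Fin m) (Fin r) ℝ) (W' : Matrix (Fin r) (Fin n) ℝ),
      (∀ i k, 0 ≤ A' i k) ∧ (∀ k j, 0 ≤ W' k j) ∧ A' * W' = A * W ∧
        supportRank A' W' < supportRank A W := by
  rw [stable_iff, not_and_or, transpose_mul] at h
  rcases h with hcol | hrow
  · obtain ⟨W', hW', hfac, hlt⟩ := exists_colSupportRank_lt hW hcol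
    exact ⟨A, W', hA, hW', hfac, by unfold supportRank; omega⟩
  · obtain ⟨B, hB, hfac, hlt⟩ := exists_colSupportRank_lt (W := Aᵀ) (fun k j => hA j k) hrow
    refine ⟨Bᵀ, W, fun i k => hB k i, hW, ?_, ?_⟩
    · simpa [transpose_mul] using congrArg transpose hfac
    · unfold supportRank
      rw [transpose_transpose]
      omega

end Factorization

/-- every nonnegative matrix factorization of inner dimension r can be
transformed into a stable one of the same inner dimension. -/
theorem stmt_7 {m n r : ℕ} (M : Matrix (Fin m) (Fin n) ℝ)
    (A : Matrix (Fin m) (Fin r) ℝ) (W : Matrix (Fin r) (Fin n) ℝ)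
    (hA : ∀ i k, 0 ≤ A i k) (hW : ∀ k j, 0 ≤ W k j) (hfac : M = A * W) :
    ∃ (A' : Matrix (Fin m) (Fin r) ℝ) (W' : Matrix (Fin r) (Fin n) ℝ),
      (∀ i k, 0 ≤ A' i k) ∧ (∀ k j, 0 ≤ W' k j) ∧ M = A' * W' ∧ Stable M A' W' := by
  subst hfac
  have hex : ∃ p, ∃ (A' : Matrix (Fin m) (Fin r) ℝ) (W' : Matrix (Fin r) (Fin n) ℝ),
      (∀ i k, 0 ≤ A' i k) ∧ (∀ k j, 0 ≤ W' k j) ∧ A' * W' = A * W ∧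
        supportRank A' W' = p :=
    ⟨_, A, W, hA, hW, rfl, rfl⟩
  obtain ⟨A', W', hA', hW', hfac, hmin⟩ := Nat.find_spec hex
  refine ⟨A', W', hA', hW', hfac.symm, ?_⟩
  by_contra hst
  rw [← hfac] at hst
  obtain ⟨A'', W'', hA'', hW'', hfac', hlt⟩ := exists_supportRank_lt_of_not_stable hA' hW' hst
  exact Nat.find_min hex (hmin ▸ hlt) ⟨A'', W'', hA'', hW'', hfac'.trans hfac, rfl⟩
end

section
/- Let M = AW be a stable nonnegative matrix factorization with rank(A) = s, and let U be a set of s linearly independent rows of A. For each column index i, let S_i range over all sets of s linearly independent columns of A and let B_{S_i} be the r×s matrix that is zero outside rows S_i and equals (A^U_{S_i})⁻¹ on rows S_i. Then Wᵢ belongs to the set { B_{S} Mᵢ^U : S a set of s linearly independent columns of A }. -/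
open scoped Classical

/-!
A first admissible set `S` for `Mᵢ` indexes linearly independent columns of `A`: otherwise a
linear dependence among them could be used, as in Carathéodory's theorem, to move the
nonnegative coefficients of `Mᵢ` until one vanishes, producing a smaller admissible set.
Extend these columns to `s = rank A` independent columns `σ`. Since the rows `U` span the row
space, `A = C A^U` for some `C`, so `A^U_σ g = 0` forces `A_σ g = 0`, hence `g = 0`: the
matrix `A^U_σ` is invertible. As `Wᵢ` is supported in `S ⊆ σ`, `Mᵢ^U = A^U_σ Wᵢ^σ`.
-/

open Matrix

section ConicCaratheodory

variable {ι 𝕜 V : Type*} [Field 𝕜] [LinearOrder 𝕜] [IsStrictOrderedRing 𝕜]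
  [AddCommGroup V] [Module 𝕜 V] {x : ι → V} {S : Finset ι} {α : ι → 𝕜}

/-- Subtracting `τ • g` with `τ = min {α k / g k | g k > 0}` keeps `α` nonnegative and kills
the coefficient at a minimizer. -/
theorem exists_zero_coeff_nonneg_sum_smul_eq_of_pos {g : ι → 𝕜} (hα : ∀ k ∈ S, 0 ≤ α k)
    (hg : ∑ k ∈ S, g k • x k = 0) {k₁ : ι} (hk₁S : k₁ ∈ S) (hk₁ : 0 < g k₁) :
    ∃ k₀ ∈ S, ∃ β : ι → 𝕜, (∀ k ∈ S, 0 ≤ β k) ∧ β k₀ = 0 ∧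
      ∑ k ∈ S, β k • x k = ∑ k ∈ S, α k • x k := by
  obtain ⟨k₀, hk₀, hmin⟩ := Finset.exists_min_image (S.filter (0 < g ·)) (fun k => α k / g k)
    ⟨k₁, Finset.mem_filter.2 ⟨hk₁S, hk₁⟩⟩
  rw [Finset.mem_filter] at hk₀
  set τ := α k₀ / g k₀
  have hτ : 0 ≤ τ := div_nonneg (hα k₀ hk₀.1) hk₀.2.le
  refine ⟨k₀, hk₀.1, fun k => α k - τ * g k, fun k hk => ?_, ?_, ?_⟩
  · rcases le_or_gt (g k) 0 with hgk | hgk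
    · nlinarith [hα k hk]
    · have hτk := (le_div_iff₀ hgk).1 (hmin k (Finset.mem_filter.2 ⟨hk, hgk⟩))
      simp only [sub_nonneg, hτk]
  · simp only [τ, div_mul_cancel₀ _ hk₀.2.ne', sub_self]
  · simp only [sub_smul, mul_smul, Finset.sum_sub_distrib, ← Finset.smul_sum, hg, smul_zero,
      sub_zero]

theorem exists_zero_coeff_nonneg_sum_smul_eq_of_not_linearIndepOn (hα : ∀ k ∈ S, 0 ≤ α k)
    (hS : ¬ LinearIndepOn 𝕜 x (S : Set ι)) :
    ∃ k₀ ∈ S, ∃ β : ι → 𝕜, (∀ k ∈ S, 0 ≤ β k) ∧ β k₀ = 0 ∧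
      ∑ k ∈ S, β k • x k = ∑ k ∈ S, α k • x k := by
  rw [linearIndepOn_finset_iff] at hS
  push Not at hS
  obtain ⟨g, hg, k₁, hk₁S, hk₁⟩ := hS
  rcases hk₁.lt_or_gt with hneg | hpos
  · refine exists_zero_coeff_nonneg_sum_smul_eq_of_pos (g := -g) hα ?_ hk₁S (by simpa using hneg)
    simp only [Pi.neg_apply, neg_smul, Finset.sum_neg_distrib, hg, neg_zero]
  · exact exists_zero_coeff_nonneg_sum_smul_eq_of_pos hα hg hk₁S hpos

end ConicCaratheodory

section Admissible

variable {m r : ℕ} {A : Matrix (Fin m) (Fin r) ℝ} {v : Fin m → ℝ} {S : Finset (Fin r)}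

theorem admissible_iff_exists_sum_smul_col :
    Admissible A v S ↔ ∃ α : Fin r → ℝ, (∀ k ∈ S, 0 ≤ α k) ∧ v = ∑ k ∈ S, α k • A.col k := by
  constructor
  · rintro ⟨α, hα, hαS, hv⟩
    refine ⟨α, fun k _ => hα k, funext fun j => ?_⟩
    simp only [Finset.sum_apply, Pi.smul_apply, col_apply, smul_eq_mul, hv j]
    exact (Finset.sum_subset (Finset.subset_univ S) fun k _ hk => by simp [hαS k hk]).symm
  · rintro ⟨α, hα, rfl⟩
    refine ⟨fun k => if k ∈ S then α k else 0, fun k => ?_, fun k hk => if_neg hk, fun j => ?_⟩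
    · dsimp only
      split_ifs with hk
      exacts [hα k hk, le_rfl]
    · simp [Finset.sum_apply, ite_mul, Finset.sum_ite_mem]

theorem IsFirstAdmissible.linearIndepOn_col (h : IsFirstAdmissible A v S) :
    LinearIndepOn ℝ A.col (S : Set (Fin r)) := by
  by_contra hdep
  obtain ⟨α, hα, hv⟩ := admissible_iff_exists_sum_smul_col.1 h.1
  obtain ⟨k₀, hk₀, β, hβ, hβk₀, hsum⟩ :=
    exists_zero_coeff_nonneg_sum_smul_eq_of_not_linearIndepOn hα hdep
  have hadm : Admissible A v (S.erase k₀) := by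
    refine admissible_iff_exists_sum_smul_col.2
      ⟨β, fun k hk => hβ k (Finset.mem_of_mem_erase hk), ?_⟩
    rw [Finset.sum_erase _ (by simp [hβk₀]), hsum, hv]
  have hcard := Finset.card_erase_lt_of_mem hk₀
  rcases h.2 _ hadm (Finset.erase_ne_self.2 hk₀) with hlt | ⟨heq, -⟩ <;> omega

end Admissible

namespace Matrix

variable {K m n k : Type*} [Field K] [Fintype n] [Fintype k]

theorem exists_linearIndependent_col_comp_superset (A : Matrix m n K) {S : Set n}
    (hS : LinearIndepOn K A.col S) :
    ∃ σ : Fin A.rank → n, LinearIndependent K (A.col ∘ σ) ∧ S ⊆ Set.range σ := by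
  classical
  obtain ⟨b, -, hSb, hspan, hb⟩ := exists_linearIndepOn_extension hS (Set.subset_univ S)
  have hspan_eq : Submodule.span K (A.col '' b) = Submodule.span K (Set.range A.col) :=
    le_antisymm (Submodule.span_mono (Set.image_subset_range _ _))
      (Submodule.span_le.2 (by simpa only [Set.image_univ] using hspan))
  have hcard : Fintype.card b = A.rank := by
    rw [rank_eq_finrank_span_cols, ← hspan_eq, Set.image_eq_range,
      finrank_span_eq_card hb.linearIndependent]
  set e := (Fintype.equivFinOfCardEq hcard).symm
  refine ⟨Subtype.val ∘ e, hb.linearIndependent.comp e e.injective, ?_⟩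
  rw [Set.range_comp, e.range_eq_univ, Set.image_univ, Subtype.range_coe]
  exact hSb

theorem exists_mul_submatrix_eq [Fintype m] (A : Matrix m n K) {U : k → m}
    (hU : LinearIndependent K (A.row ∘ U)) (hk : Fintype.card k = A.rank) :
    ∃ C : Matrix m k K, C * A.submatrix U id = A := by
  have hspan : Submodule.span K (Set.range (A.row ∘ U)) = Submodule.span K (Set.range A.row) := by
    refine Submodule.eq_of_le_of_finrank_le
      (Submodule.span_mono (Set.range_comp_subset_range _ _)) ?_
    rw [← rank_eq_finrank_span_row, finrank_span_eq_card hU, hk]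
  have hrow : ∀ j, A.row j ∈ Submodule.span K (Set.range (A.row ∘ U)) := fun j =>
    hspan ▸ Submodule.subset_span ⟨j, rfl⟩
  choose c hc using fun j => (Submodule.mem_span_range_iff_exists_fun K).1 (hrow j)
  refine ⟨Matrix.of c, ext fun j l => ?_⟩
  simpa [mul_apply, Finset.sum_apply] using congrFun (hc j) l

theorem isUnit_submatrix_of_linearIndependent [Fintype m] [DecidableEq k] (A : Matrix m n K)
    {U : k → m} {σ : k → n} (hU : LinearIndependent K (A.row ∘ U))
    (hσ : LinearIndependent K (A.col ∘ σ)) (hk : Fintype.card k = A.rank) : IsUnit (A.submatrix U σ) := by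
  obtain ⟨C, hC⟩ := A.exists_mul_submatrix_eq hU hk
  have hcols : A.submatrix id σ = C * A.submatrix U σ :=
    calc A.submatrix id σ = (C * A.submatrix U id).submatrix id σ := by rw [hC]
      _ = C * A.submatrix U σ := rfl
  rw [← mulVec_injective_iff_isUnit]
  intro g₁ g₂ h
  apply (mulVec_injective_iff.2 hσ : Function.Injective (A.submatrix id σ).mulVec)
  simp only [hcols, ← mulVec_mulVec, h]

theorem mulVec_eq_submatrix_mulVec_comp {R : Type*} [NonUnitalNonAssocSemiring R]
    (A : Matrix m n R) {σ : k → n} (hσ : Function.Injective σ) {w : n → R}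
    (hw : ∀ l ∉ Set.range σ, w l = 0) : A *ᵥ w = A.submatrix id σ *ᵥ (w ∘ σ) := by
  ext j
  exact (Fintype.sum_of_injective σ hσ _ _ (fun l hl => by simp [hw l hl]) fun _ => rfl).symm

end Matrix

theorem stmt_9_general {m n r s : ℕ} (M : Matrix (Fin m) (Fin n) ℝ)
    (A : Matrix (Fin m) (Fin r) ℝ) (W : Matrix (Fin r) (Fin n) ℝ)
    (hfac : M = A * W)
    (hstable : Stable M A W) (hrank : A.rank = s)
    (U : Fin s → Fin m)
    (hUindep : LinearIndependent ℝ (fun u : Fin s => fun k : Fin r => A (U u) k))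
    (i : Fin n) :
    ∃ σ : Fin s → Fin r, Function.Injective σ ∧
      LinearIndependent ℝ (fun t : Fin s => fun j : Fin m => A j (σ t)) ∧
      (∀ k : Fin r, (∀ t : Fin s, σ t ≠ k) → W k i = 0) ∧
      ∀ t : Fin s,
        W (σ t) i = ((A.submatrix U σ)⁻¹).mulVec (fun u : Fin s => M (U u) i) t := by
  subst hrank
  obtain ⟨S, hSfirst, hWS⟩ := hstable.1 i
  obtain ⟨σ, hσ, hSσ⟩ := A.exists_linearIndependent_col_comp_superset hSfirst.linearIndepOn_col
  have hσinj : Function.Injective σ := hσ.injective.of_comp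
  have hsupp : ∀ k, (∀ t, σ t ≠ k) → W k i = 0 := fun k hk =>
    by_contra fun hW => let ⟨t, ht⟩ := hSσ (hWS k hW); hk t ht
  have hunit := A.isUnit_submatrix_of_linearIndependent hUindep hσ (Fintype.card_fin _)
  have hMU : (fun u => M (U u) i) = A.submatrix U σ *ᵥ fun t => W (σ t) i := by
    rw [hfac]
    exact (A.submatrix U id).mulVec_eq_submatrix_mulVec_comp hσinj
      (w := fun k => W k i) fun l hl => hsupp l fun t ht => hl ⟨t, ht⟩
  refine ⟨σ, hσinj, hσ, hsupp, fun t => ?_⟩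
  rw [hMU, mulVec_mulVec, nonsing_inv_mul _ ((isUnit_iff_isUnit_det _).1 hunit), one_mulVec]

/-- for a stable factorization M = A * W with rank(A) = s and U a set of s
linearly independent rows of A, each column Wᵢ is of the form B_S Mᵢ^U for some set S of
s linearly independent columns of A (B_S being zero outside rows S and (A^U_S)⁻¹ on S). -/
theorem stmt_9 {m n r s : ℕ} (M : Matrix (Fin m) (Fin n) ℝ)
    (A : Matrix (Fin m) (Fin r) ℝ) (W : Matrix (Fin r) (Fin n) ℝ)
    (hA : ∀ i k, 0 ≤ A i k) (hW : ∀ k j, 0 ≤ W k j) (hfac : M = A * W)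
    (hstable : Stable M A W) (hrank : A.rank = s)
    (U : Fin s → Fin m) (hU : Function.Injective U)
    (hUindep : LinearIndependent ℝ (fun u : Fin s => fun k : Fin r => A (U u) k))
    (i : Fin n) :
    ∃ σ : Fin s → Fin r, Function.Injective σ ∧
      LinearIndependent ℝ (fun t : Fin s => fun j : Fin m => A j (σ t)) ∧
      (∀ k : Fin r, (∀ t : Fin s, σ t ≠ k) → W k i = 0) ∧
      ∀ t : Fin s,
        W (σ t) i = ((A.submatrix U σ)⁻¹).mulVec (fun u : Fin s => M (U u) i) t :=
  stmt_9_general M A W hfac hstable hrank U hUindep i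
end

section
/- Let M = AW be a stable nonnegative matrix factorization with rank(A) = s, let U be a set of s linearly independent rows of A, and define B_S as the r×s matrix that is zero outside rows S and equals (A^U_S)⁻¹ on rows S, for each set S of s linearly independent columns of A. Then among all vectors of the form B_S Mᵢ^U that are entrywise nonnegative, Wᵢ is the unique one whose support is minimal in the order (cardinality first, then lexicographic). -/
open scoped Classical

/-! The support of `Wᵢ` is the first admissible set for `Mᵢ`, so a Carathéodory-type reduction
shows that the columns of `A` on it are linearly independent. Extending them to `s = rank A`
independent columns `σ` makes `A^U_σ` invertible, because the rows `U` already cut out the kernel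
of `A`; hence `Wᵢ = B_σ Mᵢ^U`. Conversely any nonnegative `v = B_τ Mᵢ^U` agrees with `Wᵢ` on the
rows `U`, hence `A v = Mᵢ`, so its support is admissible and comes after that of `Wᵢ`, unless the
two supports coincide, in which case independence forces `v = Wᵢ`. -/

open Matrix Function

section LinearAlgebra

variable {K m n ι : Type*} [Field K] [Fintype n]

lemma LinearIndepOn.exists_fin_extension {V : Type*} [AddCommGroup V] [Module K V] [Finite ι]
    {f : ι → V} {S : Set ι} (hS : LinearIndepOn K f S) {s : ℕ}
    (hs : Module.finrank K (Submodule.span K (Set.range f)) = s) :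
    ∃ σ : Fin s → ι, Injective σ ∧ LinearIndependent K (f ∘ σ) ∧ S ⊆ Set.range σ := by
  obtain ⟨b, -, hSb, hspan, hb⟩ := exists_linearIndepOn_extension hS (Set.subset_univ S)
  have : Fintype b := Fintype.ofFinite b
  have hspan_eq : Submodule.span K (f '' b) = Submodule.span K (Set.range f) :=
    le_antisymm (Submodule.span_mono (Set.image_subset_range f b))
      (Submodule.span_le.2 (Set.image_univ ▸ hspan))
  have hcard : Fintype.card b = s := by
    rw [← hs, ← finrank_span_eq_card hb, ← Set.image_eq_range, hspan_eq]
  let e : Fin s ≃ b := (Fintype.equivFinOfCardEq hcard).symm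
  refine ⟨Subtype.val ∘ e, Subtype.val_injective.comp e.injective, hb.comp e e.injective,
    fun k hk => ⟨e.symm ⟨k, hSb hk⟩, by simp⟩⟩

lemma Matrix.linearIndepOn_col_of_ker {A : Matrix m n K} {s : Finset n}
    (h : ∀ g, (∀ k ∉ s, g k = 0) → A *ᵥ g = 0 → g = 0) : LinearIndepOn K A.col s := by
  rw [linearIndepOn_finset_iff]
  intro f hf k hk
  have hg := h (fun k => if k ∈ s then f k else 0) (by simp +contextual) ?_
  · simpa [hk] using congrFun hg k
  · rw [← hf]; ext j; simp [mulVec, dotProduct, Finset.sum_ite_mem, mul_comm]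

lemma Matrix.mulVec_eq_submatrix_mulVec_comp_s10 {R : Type*} [NonUnitalNonAssocSemiring R]
    [Fintype ι] (A : Matrix m n R) {σ : ι → n} (hσ : Injective σ) {x : n → R}
    (hx : ∀ k, (∀ t, σ t ≠ k) → x k = 0) :
    A *ᵥ x = A.submatrix id σ *ᵥ (x ∘ σ) := by
  ext j
  refine (Fintype.sum_of_injective σ hσ _ _ (fun k hk => ?_) (fun _ => rfl)).symm
  rw [hx k fun t ht => hk ⟨t, ht⟩, mul_zero]

lemma Matrix.mulVec_eq_of_submatrix_rows_mulVec_eq [Fintype ι] (A : Matrix m n K)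
    {U : ι → m} (hU : LinearIndependent K (A.submatrix U id).row)
    (hrank : A.rank = Fintype.card ι) {x y : n → K}
    (hxy : A.submatrix U id *ᵥ x = A.submatrix U id *ᵥ y) : A *ᵥ x = A *ᵥ y := by
  -- by rank–nullity both kernels have dimension `card n - card ι`
  have hle : LinearMap.ker A.mulVecLin ≤ LinearMap.ker (A.submatrix U id).mulVecLin :=
    fun z hz => by ext u; exact congrFun hz (U u)
  have hdim := (LinearMap.finrank_range_add_finrank_ker A.mulVecLin).trans
    (LinearMap.finrank_range_add_finrank_ker (A.submatrix U id).mulVecLin).symm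
  rw [← Matrix.rank, ← Matrix.rank, hU.rank_matrix, hrank, add_right_inj] at hdim
  have hker := Submodule.eq_of_le_of_finrank_eq hle hdim
  have hsub : x - y ∈ LinearMap.ker (A.submatrix U id).mulVecLin := by
    simp [mulVec_sub, hxy]
  rw [← hker] at hsub
  simpa [mulVec_sub, sub_eq_zero] using hsub

lemma Matrix.isUnit_det_submatrix [Fintype ι] [DecidableEq ι] (A : Matrix m n K)
    {U : ι → m} (hU : LinearIndependent K (A.submatrix U id).row)
    (hrank : A.rank = Fintype.card ι) {σ : ι → n}
    (hσ : LinearIndependent K (A.submatrix id σ).col) : IsUnit (A.submatrix U σ).det := by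
  rw [isUnit_iff_ne_zero]
  intro hdet
  obtain ⟨c, hc, hUσc⟩ := exists_mulVec_eq_zero_iff.2 hdet
  have hσinj : Injective σ := Injective.of_comp (f := A.col) hσ.injective
  set x : n → K := extend σ c 0
  have hx : ∀ k, (∀ t, σ t ≠ k) → x k = 0 := fun k hk =>
    extend_apply' _ _ _ fun ⟨t, ht⟩ => hk t ht
  have hxσ : x ∘ σ = c := funext (hσinj.extend_apply c 0)
  have hAx := A.mulVec_eq_submatrix_mulVec_comp_s10 hσinj hx
  rw [hxσ] at hAx
  have hAx0 : A *ᵥ x = A *ᵥ 0 :=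
    A.mulVec_eq_of_submatrix_rows_mulVec_eq hU hrank (by
      rw [mulVec_zero, ← hUσc]; ext u; exact congrFun hAx (U u))
  rw [hAx, mulVec_zero] at hAx0
  exact hc (mulVec_injective_iff.2 hσ (hAx0.trans (mulVec_zero _).symm))

lemma Matrix.forall_eq_inv_mulVec_iff [Fintype ι] [DecidableEq ι] (A : Matrix m n K)
    (U : ι → m) {σ : ι → n} (hσ : Injective σ) (hdet : IsUnit (A.submatrix U σ).det)
    {x : n → K} (hx : ∀ k, (∀ t, σ t ≠ k) → x k = 0) (b : ι → K) :
    (∀ t, x (σ t) = ((A.submatrix U σ)⁻¹ *ᵥ b) t) ↔ A.submatrix U id *ᵥ x = b := by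
  have hrows : A.submatrix U id *ᵥ x = A.submatrix U σ *ᵥ (x ∘ σ) := by
    ext u; exact congrFun (A.mulVec_eq_submatrix_mulVec_comp_s10 hσ hx) (U u)
  rw [hrows, ← funext_iff]
  constructor
  · intro h
    rw [show x ∘ σ = _ from h, mulVec_mulVec, mul_nonsing_inv _ hdet, one_mulVec]
  · intro h
    rw [← h, mulVec_mulVec, nonsing_inv_mul _ hdet, one_mulVec]; rfl

end LinearAlgebra

section Admissible

variable {m r : ℕ} {A : Matrix (Fin m) (Fin r) ℝ}

lemma admissible_mulVec {x : Fin r → ℝ} (hx : 0 ≤ x) {S : Finset (Fin r)}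
    (hS : ∀ k ∉ S, x k = 0) : Admissible A (A *ᵥ x) S :=
  ⟨x, hx, hS, fun j => by simp [mulVec, dotProduct, mul_comm]⟩

lemma IsFirstAdmissible.eq_of_subset {v : Fin m → ℝ} {S T : Finset (Fin r)}
    (hS : IsFirstAdmissible A v S) (hT : Admissible A v T) (hTS : T ⊆ S) : T = S := by
  by_contra hne
  rcases hS.2 T hT hne with h | ⟨h, -⟩
  · exact (Finset.card_le_card hTS).not_gt h
  · exact hne (Finset.eq_of_subset_of_card_le hTS h.le)

lemma IsFirstAdmissible.of_support_subset {x : Fin r → ℝ} (hx : 0 ≤ x) {S : Finset (Fin r)}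
    (hS : IsFirstAdmissible A (A *ᵥ x) S) (hxS : ∀ k, x k ≠ 0 → k ∈ S) :
    IsFirstAdmissible A (A *ᵥ x) {k | x k ≠ 0} := by
  rwa [hS.eq_of_subset (admissible_mulVec (S := {k | x k ≠ 0}) hx (by simp))
    fun k hk => hxS k (by simpa using hk)]

lemma exists_admissible_erase {x g : Fin r → ℝ} (hx : 0 ≤ x) (hgx : ∀ k, x k = 0 → g k = 0)
    (hAg : A *ᵥ g = 0) {k₀ : Fin r} (hk₀ : 0 < g k₀) :
    ∃ k, x k ≠ 0 ∧ Admissible A (A *ᵥ x) (({k | x k ≠ 0} : Finset (Fin r)).erase k) := by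
  -- slide `x` along `-g` until the first coordinate vanishes
  obtain ⟨k₁, hk₁, hmin⟩ := Finset.exists_min_image ({k | 0 < g k} : Finset (Fin r))
    (fun k => x k / g k) ⟨k₀, by simpa using hk₀⟩
  rw [Finset.mem_filter_univ] at hk₁
  set c := x k₁ / g k₁
  have hc : 0 ≤ c := div_nonneg (hx k₁) hk₁.le
  have hy : 0 ≤ x - c • g := fun k => by
    simp only [Pi.zero_apply, Pi.sub_apply, Pi.smul_apply, smul_eq_mul, sub_nonneg]
    rcases lt_or_ge 0 (g k) with hgk | hgk
    · exact (le_div_iff₀ hgk).1 (hmin k (by simpa using hgk))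
    · exact (mul_nonpos_of_nonneg_of_nonpos hc hgk).trans (hx k)
  refine ⟨k₁, fun h => hk₁.ne' (hgx k₁ h), ?_⟩
  rw [← sub_zero (A *ᵥ x), ← smul_zero c, ← hAg, ← mulVec_smul, ← mulVec_sub]
  refine admissible_mulVec hy fun k hk => ?_
  rcases eq_or_ne k k₁ with rfl | hne
  · simp [c, hk₁.ne']
  · have hxk : x k = 0 := by simpa [hne] using hk
    simp [hxk, hgx k hxk]

lemma IsFirstAdmissible.eq_zero_of_mulVec_eq_zero {x : Fin r → ℝ} (hx : 0 ≤ x)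
    (h : IsFirstAdmissible A (A *ᵥ x) {k | x k ≠ 0}) {g : Fin r → ℝ}
    (hgx : ∀ k, x k = 0 → g k = 0) (hAg : A *ᵥ g = 0) : g = 0 := by
  have key : ∀ g : Fin r → ℝ, (∀ k, x k = 0 → g k = 0) → A *ᵥ g = 0 → g ≤ 0 := by
    intro g hgx hAg k
    by_contra! hk
    obtain ⟨k', hk', hadm⟩ := exists_admissible_erase hx hgx hAg hk
    exact Finset.erase_eq_self.1 (h.eq_of_subset hadm (Finset.erase_subset _ _))
      (by simpa using hk')
  exact le_antisymm (key g hgx hAg)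
    (neg_nonpos.1 (key (-g) (by simp +contextual [hgx]) (by simp [mulVec_neg, hAg])))

end Admissible

theorem stmt_10_general {m n r s : ℕ} (M : Matrix (Fin m) (Fin n) ℝ)
    (A : Matrix (Fin m) (Fin r) ℝ) (W : Matrix (Fin r) (Fin n) ℝ)
    (hW : ∀ k j, 0 ≤ W k j) (hfac : M = A * W)
    (hstable : Stable M A W) (hrank : A.rank = s)
    (U : Fin s → Fin m)
    (hUindep : LinearIndependent ℝ (fun u : Fin s => fun k : Fin r => A (U u) k))
    (i : Fin n) :
    -- Wᵢ is itself of the form B_S Mᵢ^U for some set S of s linearly independent columns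
    (∃ σ : Fin s → Fin r, Function.Injective σ ∧
      LinearIndependent ℝ (fun t : Fin s => fun j : Fin m => A j (σ t)) ∧
      (∀ k : Fin r, (∀ t : Fin s, σ t ≠ k) → W k i = 0) ∧
      ∀ t : Fin s,
        W (σ t) i = ((A.submatrix U σ)⁻¹).mulVec (fun u : Fin s => M (U u) i) t) ∧
    -- and any other nonnegative vector of this form has lexicographically later support
    ∀ v : Fin r → ℝ,
      (∃ σ : Fin s → Fin r, Function.Injective σ ∧
        LinearIndependent ℝ (fun t : Fin s => fun j : Fin m => A j (σ t)) ∧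
        (∀ k : Fin r, (∀ t : Fin s, σ t ≠ k) → v k = 0) ∧
        ∀ t : Fin s,
          v (σ t) = ((A.submatrix U σ)⁻¹).mulVec (fun u : Fin s => M (U u) i) t) →
      (∀ k, 0 ≤ v k) → v ≠ (fun k => W k i) →
      SubsetLt (Finset.univ.filter fun k => W k i ≠ 0)
        (Finset.univ.filter fun k => v k ≠ 0) := by
  set w : Fin r → ℝ := fun k => W k i
  have hw : 0 ≤ w := fun k => hW k i
  have hMw : (fun j => M j i) = A *ᵥ w := by subst hfac; rfl
  have hMU : (fun u => M (U u) i) = A.submatrix U id *ᵥ w := by subst hfac; rfl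
  have hrank' : A.rank = Fintype.card (Fin s) := by rw [hrank, Fintype.card_fin]
  obtain ⟨S, hS, hwS⟩ := hstable.1 i
  rw [hMw] at hS
  have hfirst := hS.of_support_subset hw hwS
  have hker : ∀ g, (∀ k, w k = 0 → g k = 0) → A *ᵥ g = 0 → g = 0 := fun _ =>
    hfirst.eq_zero_of_mulVec_eq_zero hw
  obtain ⟨σ, hσ, hσind, hwσ⟩ := (linearIndepOn_col_of_ker (s := {k | w k ≠ 0}) fun g hg =>
    hker g (fun k hk => hg k (by simpa using hk))).exists_fin_extension
      (A.rank_eq_finrank_span_cols.symm.trans hrank)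
  have hwsupp : ∀ k, (∀ t, σ t ≠ k) → w k = 0 := fun k hk => by
    by_contra hwk
    obtain ⟨t, ht⟩ := hwσ (by simpa using hwk)
    exact hk t ht
  refine ⟨⟨σ, hσ, hσind, hwsupp, (A.forall_eq_inv_mulVec_iff U hσ
    (A.isUnit_det_submatrix hUindep hrank' hσind) hwsupp _).2 hMU.symm⟩, ?_⟩
  rintro v ⟨τ, hτ, hτind, hvsupp, hvform⟩ hv hvw
  have hAv : A *ᵥ v = A *ᵥ w := A.mulVec_eq_of_submatrix_rows_mulVec_eq hUindep hrank'
    (((A.forall_eq_inv_mulVec_iff U hτ (A.isUnit_det_submatrix hUindep hrank' hτind)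
      hvsupp _).1 hvform).trans hMU)
  -- equal supports would put `v - w` in the kernel of `A` on the support of `w`
  refine hfirst.2 _ (hAv ▸ admissible_mulVec hv (by simp)) fun hsupp => hvw ?_
  refine sub_eq_zero.1 (hker _ (fun k hk => ?_) (by rw [mulVec_sub, hAv, sub_self]))
  have hvk : v k = 0 := by simpa [hk] using congrArg (k ∈ ·) hsupp
  simp [hvk, hk]

/-- for a stable factorization, among all entrywise nonnegative vectors of
the form B_S Mᵢ^U, the column Wᵢ is the unique one with support minimal in the order
(cardinality first, then lexicographic). -/
theorem stmt_10 {m n r s : ℕ} (M : Matrix (Fin m) (Fin n) ℝ)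
    (A : Matrix (Fin m) (Fin r) ℝ) (W : Matrix (Fin r) (Fin n) ℝ)
    (hA : ∀ i k, 0 ≤ A i k) (hW : ∀ k j, 0 ≤ W k j) (hfac : M = A * W)
    (hstable : Stable M A W) (hrank : A.rank = s)
    (U : Fin s → Fin m) (hU : Function.Injective U)
    (hUindep : LinearIndependent ℝ (fun u : Fin s => fun k : Fin r => A (U u) k))
    (i : Fin n) :
    -- Wᵢ is itself of the form B_S Mᵢ^U for some set S of s linearly independent columns
    (∃ σ : Fin s → Fin r, Function.Injective σ ∧
      LinearIndependent ℝ (fun t : Fin s => fun j : Fin m => A j (σ t)) ∧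
      (∀ k : Fin r, (∀ t : Fin s, σ t ≠ k) → W k i = 0) ∧
      ∀ t : Fin s,
        W (σ t) i = ((A.submatrix U σ)⁻¹).mulVec (fun u : Fin s => M (U u) i) t) ∧
    -- and any other nonnegative vector of this form has lexicographically later support
    ∀ v : Fin r → ℝ,
      (∃ σ : Fin s → Fin r, Function.Injective σ ∧
        LinearIndependent ℝ (fun t : Fin s => fun j : Fin m => A j (σ t)) ∧
        (∀ k : Fin r, (∀ t : Fin s, σ t ≠ k) → v k = 0) ∧
        ∀ t : Fin s,
          v (σ t) = ((A.submatrix U σ)⁻¹).mulVec (fun u : Fin s => M (U u) i) t) →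
      (∀ k, 0 ≤ v k) → v ≠ (fun k => W k i) →
      SubsetLt (Finset.univ.filter fun k => W k i ≠ 0)
        (Finset.univ.filter fun k => v k ≠ 0) :=
  stmt_10_general M A W hW hfac hstable hrank U hUindep i
end

section
/- Let C be the closed unit disk in ℝ² centered at the origin, and let c be the closed disk of radius 1/2 centered at the origin. Any triangle T with c ⊆ T ⊆ C must be equilateral with all three vertices on the boundary of C. -/
open Metric
open scoped InnerProductSpace

/-- If a unit-norm-scaled pair of vectors both have inner product ≤ -‖·‖/2 with a vector
`q` of norm at most 1, then their inner product is at least `-(‖a‖*‖b‖)/2`. -/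
private lemma cap_ineq {E : Type*} [NormedAddCommGroup E] [InnerProductSpace ℝ E]
    (a b q : E) (ha : 0 < ‖a‖) (hb : 0 < ‖b‖) (hq : ‖q‖ ≤ 1)
    (h1 : ⟪a, q⟫_ℝ ≤ -‖a‖ / 2) (h2 : ⟪b, q⟫_ℝ ≤ -‖b‖ / 2) :
    -(‖a‖ * ‖b‖) / 2 ≤ ⟪a, b⟫_ℝ := by
  set u := (‖a‖)⁻¹ • a + (‖b‖)⁻¹ • b with hu_def
  have huq : ⟪u, q⟫_ℝ ≤ -1 := by
    have e : ⟪u, q⟫_ℝ = (‖a‖)⁻¹ * ⟪a, q⟫_ℝ + (‖b‖)⁻¹ * ⟪b, q⟫_ℝ := by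
      simp [hu_def, inner_add_left, real_inner_smul_left]
    have l1 : (‖a‖)⁻¹ * ⟪a, q⟫_ℝ ≤ -(1/2) := by
      rw [inv_mul_le_iff₀ ha]
      nlinarith
    have l2 : (‖b‖)⁻¹ * ⟪b, q⟫_ℝ ≤ -(1/2) := by
      rw [inv_mul_le_iff₀ hb]
      nlinarith
    linarith [e, l1, l2]
  have hnu : 1 ≤ ‖u‖ := by
    have := abs_real_inner_le_norm u q
    have h1' : 1 ≤ |⟪u, q⟫_ℝ| := by
      rw [abs_le'] at *
      rcases abs_cases (⟪u, q⟫_ℝ) with ⟨h, _⟩ | ⟨h, _⟩ <;> nlinarith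
    nlinarith [norm_nonneg u, norm_nonneg q]
  have hnu2 : ‖u‖ ^ 2 = 2 + 2 * ((‖a‖)⁻¹ * (‖b‖)⁻¹ * ⟪a, b⟫_ℝ) := by
    rw [norm_add_sq_real]
    rw [norm_smul, norm_smul, real_inner_smul_left, real_inner_smul_right]
    simp [Real.norm_eq_abs, abs_of_pos, ha, hb, abs_of_nonneg ha.le, abs_of_nonneg hb.le]
    field_simp
    ring
  have h1u : 1 ≤ ‖u‖ ^ 2 := by nlinarith
  have : -(1/2) ≤ (‖a‖)⁻¹ * (‖b‖)⁻¹ * ⟪a, b⟫_ℝ := by nlinarith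
  have hab : 0 < ‖a‖ * ‖b‖ := mul_pos ha hb
  have h := mul_le_mul_of_nonneg_right this (le_of_lt hab)
  have hx : (‖a‖)⁻¹ * (‖b‖)⁻¹ * ⟪a, b⟫_ℝ * (‖a‖ * ‖b‖) = ⟪a, b⟫_ℝ := by
    field_simp
  rw [hx] at h
  linarith

/-- Equality case: if moreover `⟪a,b⟫ = -(‖a‖*‖b‖)/2`, then `q` is forced. -/
private lemma cap_eq {E : Type*} [NormedAddCommGroup E] [InnerProductSpace ℝ E]
    (a b q : E) (ha : 0 < ‖a‖) (hb : 0 < ‖b‖) (hq : ‖q‖ ≤ 1)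
    (h1 : ⟪a, q⟫_ℝ ≤ -‖a‖ / 2) (h2 : ⟪b, q⟫_ℝ ≤ -‖b‖ / 2)
    (h3 : ⟪a, b⟫_ℝ = -(‖a‖ * ‖b‖) / 2) :
    q = -((‖a‖)⁻¹ • a + (‖b‖)⁻¹ • b) ∧ ‖q‖ = 1 := by
  set u := (‖a‖)⁻¹ • a + (‖b‖)⁻¹ • b with hu_def
  have huq : ⟪u, q⟫_ℝ ≤ -1 := by
    have e : ⟪u, q⟫_ℝ = (‖a‖)⁻¹ * ⟪a, q⟫_ℝ + (‖b‖)⁻¹ * ⟪b, q⟫_ℝ := by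
      simp [hu_def, inner_add_left, real_inner_smul_left]
    have l1 : (‖a‖)⁻¹ * ⟪a, q⟫_ℝ ≤ -(1/2) := by
      rw [inv_mul_le_iff₀ ha]; nlinarith
    have l2 : (‖b‖)⁻¹ * ⟪b, q⟫_ℝ ≤ -(1/2) := by
      rw [inv_mul_le_iff₀ hb]; nlinarith
    linarith [e, l1, l2]
  have hnu2 : ‖u‖ ^ 2 = 1 := by
    rw [hu_def, norm_add_sq_real]
    rw [norm_smul, norm_smul, real_inner_smul_left, real_inner_smul_right]
    simp [Real.norm_eq_abs, abs_of_nonneg ha.le, abs_of_nonneg hb.le, h3]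
    field_simp
    ring
  have hnu : ‖u‖ = 1 := by
    nlinarith [norm_nonneg u]
  have hqu : ‖q + u‖ ^ 2 ≤ 0 := by
    rw [norm_add_sq_real, hnu2]
    have hc := real_inner_comm u q
    nlinarith [huq, hc, mul_nonneg (sub_nonneg.2 hq) (norm_nonneg q)]
  have hq0 : q + u = 0 := by
    have := sq_nonneg ‖q + u‖
    have : ‖q + u‖ ^ 2 = 0 := le_antisymm hqu this
    have : ‖q + u‖ = 0 := by nlinarith [norm_nonneg (q + u)]
    exact norm_eq_zero.mp this
  have hqeq : q = -u := by
    have := hq0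
    linear_combination (norm := abel) this
  constructor
  · exact hqeq
  · rw [hqeq, norm_neg, hnu]

/-- Norm of difference of the two unit vectors at angle 120°+60°... -/
private lemma diff_norm_sq {E : Type*} [NormedAddCommGroup E] [InnerProductSpace ℝ E]
    (a b : E) (ha : 0 < ‖a‖) (hb : 0 < ‖b‖)
    (h3 : ⟪a, b⟫_ℝ = -(‖a‖ * ‖b‖) / 2) :
    ‖(‖a‖)⁻¹ • a - (‖b‖)⁻¹ • b‖ ^ 2 = 3 := by
  rw [norm_sub_sq_real, norm_smul, norm_smul, real_inner_smul_left, real_inner_smul_right]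
  simp [Real.norm_eq_abs, abs_of_nonneg ha.le, abs_of_nonneg hb.le, h3]
  field_simp
  ring


private lemma force_eq (r0 r1 r2 a01 a02 a12 : ℝ)
    (hr0 : 0 < r0) (hr1 : 0 < r1) (hr2 : 0 < r2)
    (h01 : -(r0 * r1) / 2 ≤ a01) (h02 : -(r0 * r2) / 2 ≤ a02) (h12 : -(r1 * r2) / 2 ≤ a12)
    (heq0 : r0 ^ 2 + a01 + a02 = 0) (heq1 : a01 + r1 ^ 2 + a12 = 0)
    (heq2 : a02 + a12 + r2 ^ 2 = 0) :
    a01 = -(r0 * r1) / 2 ∧ a02 = -(r0 * r2) / 2 ∧ a12 = -(r1 * r2) / 2 := by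
  refine ⟨?_, ?_, ?_⟩ <;>
    nlinarith [sq_nonneg (r0 - r1), sq_nonneg (r0 - r2), sq_nonneg (r1 - r2)]

/-- any triangle T with c ⊆ T ⊆ C, where c and C are the concentric closed
disks of radii 1/2 and 1 about the origin of ℝ², is equilateral with its three vertices
on the boundary of C. -/
theorem stmt_12 (p : Fin 3 → EuclideanSpace ℝ (Fin 2))
    (hp : AffineIndependent ℝ p)
    (hc : closedBall (0 : EuclideanSpace ℝ (Fin 2)) (1 / 2) ⊆ convexHull ℝ (Set.range p))
    (hC : convexHull ℝ (Set.range p) ⊆ closedBall (0 : EuclideanSpace ℝ (Fin 2)) 1) :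
    (∀ i, dist (p i) (0 : EuclideanSpace ℝ (Fin 2)) = 1) ∧
    (∀ i j, i ≠ j → dist (p i) (p j) = dist (p 0) (p 1)) := by
  classical
  have hspan : affineSpan ℝ (Set.range p) = ⊤ := by
    rw [hp.affineSpan_eq_top_iff_card_eq_finrank_add_one]
    simp [finrank_euclideanSpace_fin]
  let b : AffineBasis (Fin 3) ℝ (EuclideanSpace ℝ (Fin 2)) := ⟨p, hp, hspan⟩
  have hb : ∀ i, b i = p i := fun i => rfl
  -- nonnegativity of coordinates on the hull
  have hcoord_nonneg : ∀ x ∈ convexHull ℝ (Set.range p), ∀ i, 0 ≤ b.coord i x := by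
    intro x hx i
    have hrange : Set.range p = Set.range (b : Fin 3 → EuclideanSpace ℝ (Fin 2)) := rfl
    rw [hrange, b.convexHull_eq_nonneg_coord] at hx
    exact hx i
  -- Riesz vectors for the linear parts of the coordinates
  let v : Fin 3 → EuclideanSpace ℝ (Fin 2) := fun i =>
    (InnerProductSpace.toDual ℝ (EuclideanSpace ℝ (Fin 2))).symm (LinearMap.toContinuousLinearMap (b.coord i).linear)
  have hv : ∀ i (x : EuclideanSpace ℝ (Fin 2)), ⟪v i, x⟫_ℝ = (b.coord i).linear x := by
    intro i x
    simp only [v, InnerProductSpace.toDual_symm_apply]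
    simp
  have hlin : ∀ i (x : EuclideanSpace ℝ (Fin 2)), (b.coord i).linear x = b.coord i x - b.coord i 0 := by
    intro i x
    have h := (b.coord i).linearMap_vsub x 0
    simpa using h
  have hcoordpj : ∀ i j, i ≠ j → b.coord i (p j) = 0 := by
    intro i j hij
    have := b.coord_apply_ne hij
    rwa [hb] at this
  have hcoordpi : ∀ i, b.coord i (p i) = 1 := by
    intro i
    have := b.coord_apply_eq i
    rwa [hb] at this
  -- the vectors v i are nonzero
  have hvpos : ∀ i, 0 < ‖v i‖ := by
    intro i
    obtain ⟨j, hji⟩ : ∃ j : Fin 3, j ≠ i := ⟨if i = 0 then 1 else 0, by fin_cases i <;> decide⟩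
    have h1 : ⟪v i, p i - p j⟫_ℝ = 1 := by
      rw [hv, map_sub, hlin, hlin, hcoordpi, hcoordpj i j (Ne.symm hji)]
      ring
    have : v i ≠ 0 := by
      intro h0
      rw [h0, inner_zero_left] at h1
      norm_num at h1
    exact norm_pos_iff.mpr this
  -- the half-plane constant bound from the small disk
  have hd : ∀ i, ‖v i‖ / 2 ≤ b.coord i 0 := by
    intro i
    set y : EuclideanSpace ℝ (Fin 2) := (-(1/2) * (‖v i‖)⁻¹) • v i with hy
    have hyn : ‖y‖ = 1 / 2 := by
      rw [hy, norm_smul]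
      simp [Real.norm_eq_abs, abs_of_pos (hvpos i), abs_mul]
      field_simp [ne_of_gt (hvpos i)]
    have hymem : y ∈ closedBall (0 : EuclideanSpace ℝ (Fin 2)) (1/2) := by
      rw [mem_closedBall_zero_iff, hyn]
    have h0 : 0 ≤ b.coord i y := hcoord_nonneg y (hc hymem) i
    have hcy : b.coord i y = ⟪v i, y⟫_ℝ + b.coord i 0 := by
      rw [hv, hlin]; ring
    have hinner : ⟪v i, y⟫_ℝ = -‖v i‖ / 2 := by
      rw [hy, real_inner_smul_right, real_inner_self_eq_norm_sq]
      field_simp [ne_of_gt (hvpos i)]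
    rw [hcy, hinner] at h0
    linarith
  -- the cap inequalities
  have hcap : ∀ i j, i ≠ j → ⟪v i, p j⟫_ℝ ≤ -‖v i‖ / 2 := by
    intro i j hij
    have h0 : ⟪v i, p j⟫_ℝ + b.coord i 0 = 0 := by
      rw [hv, hlin, hcoordpj i j hij]; ring
    have := hd i
    linarith
  -- vertices are in the unit ball
  have hpnorm : ∀ i, ‖p i‖ ≤ 1 := by
    intro i
    have : p i ∈ closedBall (0 : EuclideanSpace ℝ (Fin 2)) 1 :=
      hC (subset_convexHull ℝ _ (Set.mem_range_self i))
    rwa [mem_closedBall_zero_iff] at this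
  -- the linear parts sum to zero
  have hvsum : v 0 + v 1 + v 2 = 0 := by
    have hzero : ∀ x : EuclideanSpace ℝ (Fin 2), ⟪v 0 + v 1 + v 2, x⟫_ℝ = 0 := by
      intro x
      rw [inner_add_left, inner_add_left, hv, hv, hv, hlin, hlin, hlin]
      have h1 : b.coord 0 x + b.coord 1 x + b.coord 2 x = 1 := by
        have := b.sum_coord_apply_eq_one x
        rwa [Fin.sum_univ_three] at this
      have h2 : b.coord 0 (0 : EuclideanSpace ℝ (Fin 2)) + b.coord 1 (0 : EuclideanSpace ℝ (Fin 2)) + b.coord 2 (0 : EuclideanSpace ℝ (Fin 2)) = 1 := by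
        have := b.sum_coord_apply_eq_one (0 : EuclideanSpace ℝ (Fin 2))
        rwa [Fin.sum_univ_three] at this
      linarith
    have := hzero (v 0 + v 1 + v 2)
    exact inner_self_eq_zero.mp this
  have hr0 : 0 < ‖v 0‖ := hvpos 0
  have hr1 : 0 < ‖v 1‖ := hvpos 1
  have hr2 : 0 < ‖v 2‖ := hvpos 2
  have h01 : -(‖v 0‖ * ‖v 1‖) / 2 ≤ ⟪v 0, v 1⟫_ℝ :=
    cap_ineq (v 0) (v 1) (p 2) hr0 hr1 (hpnorm 2)
      (hcap 0 2 (by decide)) (hcap 1 2 (by decide))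
  have h02 : -(‖v 0‖ * ‖v 2‖) / 2 ≤ ⟪v 0, v 2⟫_ℝ :=
    cap_ineq (v 0) (v 2) (p 1) hr0 hr2 (hpnorm 1)
      (hcap 0 1 (by decide)) (hcap 2 1 (by decide))
  have h12 : -(‖v 1‖ * ‖v 2‖) / 2 ≤ ⟪v 1, v 2⟫_ℝ :=
    cap_ineq (v 1) (v 2) (p 0) hr1 hr2 (hpnorm 0)
      (hcap 1 0 (by decide)) (hcap 2 0 (by decide))
  have heq0 : ‖v 0‖ ^ 2 + ⟪v 0, v 1⟫_ℝ + ⟪v 0, v 2⟫_ℝ = 0 := by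
    have h := congrArg (fun w => ⟪v 0, w⟫_ℝ) hvsum
    simp only [inner_add_right, inner_zero_right] at h
    rw [real_inner_self_eq_norm_sq] at h
    linarith
  have heq1 : ⟪v 0, v 1⟫_ℝ + ‖v 1‖ ^ 2 + ⟪v 1, v 2⟫_ℝ = 0 := by
    have h := congrArg (fun w => ⟪v 1, w⟫_ℝ) hvsum
    simp only [inner_add_right, inner_zero_right] at h
    rw [real_inner_self_eq_norm_sq, real_inner_comm (v 0) (v 1)] at h
    linarith
  have heq2 : ⟪v 0, v 2⟫_ℝ + ⟪v 1, v 2⟫_ℝ + ‖v 2‖ ^ 2 = 0 := by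
    have h := congrArg (fun w => ⟪v 2, w⟫_ℝ) hvsum
    simp only [inner_add_right, inner_zero_right] at h
    rw [real_inner_self_eq_norm_sq, real_inner_comm (v 0) (v 2),
      real_inner_comm (v 1) (v 2)] at h
    linarith
  obtain ⟨e01, e02, e12⟩ :=
    force_eq (‖v 0‖) (‖v 1‖) (‖v 2‖) (⟪v 0, v 1⟫_ℝ) (⟪v 0, v 2⟫_ℝ) (⟪v 1, v 2⟫_ℝ)
      hr0 hr1 hr2 h01 h02 h12 heq0 heq1 heq2
  -- equality case of the cap lemma: the vertices are determined
  have hp2 := cap_eq (v 0) (v 1) (p 2) hr0 hr1 (hpnorm 2)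
    (hcap 0 2 (by decide)) (hcap 1 2 (by decide)) e01
  have hp1 := cap_eq (v 0) (v 2) (p 1) hr0 hr2 (hpnorm 1)
    (hcap 0 1 (by decide)) (hcap 2 1 (by decide)) e02
  have hp0 := cap_eq (v 1) (v 2) (p 0) hr1 hr2 (hpnorm 0)
    (hcap 1 0 (by decide)) (hcap 2 0 (by decide)) e12
  have hnorm0 : ‖p 0‖ = 1 := hp0.2
  have hnorm1 : ‖p 1‖ = 1 := hp1.2
  have hnorm2 : ‖p 2‖ = 1 := hp2.2
  -- distances
  have d01 : ‖p 0 - p 1‖ ^ 2 = 3 := by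
    have h' : p 0 - p 1 = (‖v 0‖)⁻¹ • v 0 - (‖v 1‖)⁻¹ • v 1 := by
      rw [hp0.1, hp1.1]; abel
    rw [h']
    exact diff_norm_sq (v 0) (v 1) hr0 hr1 e01
  have d02 : ‖p 0 - p 2‖ ^ 2 = 3 := by
    have h' : p 0 - p 2 = (‖v 0‖)⁻¹ • v 0 - (‖v 2‖)⁻¹ • v 2 := by
      rw [hp0.1, hp2.1]; abel
    rw [h']
    exact diff_norm_sq (v 0) (v 2) hr0 hr2 e02
  have d12 : ‖p 1 - p 2‖ ^ 2 = 3 := by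
    have h' : p 1 - p 2 = (‖v 1‖)⁻¹ • v 1 - (‖v 2‖)⁻¹ • v 2 := by
      rw [hp1.1, hp2.1]; abel
    rw [h']
    exact diff_norm_sq (v 1) (v 2) hr1 hr2 e12
  have d10 : ‖p 1 - p 0‖ ^ 2 = 3 := by rw [norm_sub_rev]; exact d01
  have d20 : ‖p 2 - p 0‖ ^ 2 = 3 := by rw [norm_sub_rev]; exact d02
  have d21 : ‖p 2 - p 1‖ ^ 2 = 3 := by rw [norm_sub_rev]; exact d12
  have key : ∀ i j : Fin 3, ‖p i - p j‖ ^ 2 = 3 → dist (p i) (p j) = Real.sqrt 3 := by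
    intro i j h
    rw [dist_eq_norm, ← Real.sqrt_sq (norm_nonneg (p i - p j)), h]
  have hdist : ∀ i j : Fin 3, i ≠ j → dist (p i) (p j) = Real.sqrt 3 := by
    intro i j hij
    fin_cases i <;> fin_cases j <;>
      first
        | exact absurd rfl hij
        | exact key _ _ d01
        | exact key _ _ d02
        | exact key _ _ d12
        | exact key _ _ d10
        | exact key _ _ d20
        | exact key _ _ d21
  refine ⟨?_, ?_⟩
  · intro i
    rw [dist_zero_right]
    fin_cases i
    · exact hnorm0
    · exact hnorm1
    · exact hnorm2
  · intro i j hij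
    rw [hdist i j hij, hdist 0 1 (by decide)]
end

section
/- Let T₁, …, Tₙ be distinct equilateral triangles inscribed in the unit circle C (vertices on the boundary of C), and let S be the set of vertices of the polygon ∩ᵢ Tᵢ. If T is any triangle with S ⊆ T ⊆ C, then T ∈ {T₁, …, Tₙ}. -/
/-!
Every inscribed equilateral triangle contains the disk `c` of radius `1/2`, hence so does
`K = ⋂ Tᵢ`; by Krein–Milman `K` is the closed convex hull of `S ⊆ T`, so `c ⊆ K ⊆ T ⊆ C`.

Such a triangle `T` is itself an inscribed equilateral triangle. An edge of `T` avoids the interior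
of `c` and has its endpoints in `C`, so it subtends an angle of at most `2π/3` at the centre; since
the centre is a positive combination of the vertices these three angles add up to `2π`, and all the
inequalities are equalities.

If `T` were none of the `Tᵢ`, its vertex `q 0` would be a vertex of no `Tᵢ`, because two inscribed
equilateral triangles sharing a vertex coincide. Then `-c • q 0` lies in every `Tᵢ` for some
`c > 1/2`, hence in `K`, but not in `T`.
-/

open Metric

/-- An equilateral triangle inscribed in the unit circle of ℝ², given by its vertices. -/
def InscribedEquilateral (p : Fin 3 → EuclideanSpace ℝ (Fin 2)) : Prop :=
  AffineIndependent ℝ p ∧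
  (∀ a, dist (p a) (0 : EuclideanSpace ℝ (Fin 2)) = 1) ∧
  ∀ a b, a ≠ b → dist (p a) (p b) = dist (p 0) (p 1)

open Set Module Function Filter Topology RealInnerProductSpace
open scoped EuclideanSpace

theorem IsCompact.subset_of_extremePoints_subset {E : Type*} [AddCommGroup E] [Module ℝ E]
    [TopologicalSpace E] [T2Space E] [IsTopologicalAddGroup E] [ContinuousSMul ℝ E]
    [LocallyConvexSpace ℝ E] {K T : Set E} (hK : IsCompact K) (hKc : Convex ℝ K)
    (hT : IsClosed T) (hTc : Convex ℝ T) (h : K.extremePoints ℝ ⊆ T) : K ⊆ T := by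
  rw [← closure_convexHull_extremePoints hK hKc]
  exact closure_minimal (convexHull_min h hTc) hT

theorem exists_half_lt_forall_mul_le_half {ι : Type*} [Finite ι] {t : ι → ℝ}
    (ht : ∀ i, t i < 1) : ∃ c, 1 / 2 < c ∧ ∀ i, c * t i ≤ 1 / 2 := by
  have hev : ∀ᶠ c in 𝓝 (1 / 2 : ℝ), ∀ i, c * t i < 1 / 2 :=
    eventually_all.2 fun i => (isOpen_lt (continuous_mul_const (t i)) continuous_const).mem_nhds
      (by linarith [ht i] : 1 / 2 * t i < 1 / 2)
  obtain ⟨c, hct, hc⟩ :=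
    ((hev.filter_mono nhdsWithin_le_nhds).and (self_mem_nhdsWithin (s := Ioi (1 / 2 : ℝ)))).exists
  exact ⟨c, hc, fun i => (hct i).le⟩

theorem Fin.pairwise_three {R : Fin 3 → Fin 3 → Prop} (hR : Std.Symm R) (h₀₁ : R 0 1)
    (h₀₂ : R 0 2) (h₁₂ : R 1 2) : Pairwise R := by
  intro a b hab
  fin_cases a <;> fin_cases b
  all_goals first
    | exact absurd rfl hab
    | assumption
    | exact hR.symm _ _ ‹_›

section InnerProductSpace

variable {V : Type*} [NormedAddCommGroup V] [InnerProductSpace ℝ V]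

theorem exists_sum_smul_eq_of_mem_convexHull_range {ι : Type*} [Fintype ι] {p : ι → V} {x : V}
    (hx : x ∈ convexHull ℝ (range p)) :
    ∃ w : ι → ℝ, (∀ i, 0 ≤ w i) ∧ ∑ i, w i = 1 ∧ ∑ i, w i • p i = x := by
  classical
  rw [convexHull_range_eq_exists_affineCombination] at hx
  obtain ⟨s, w, hw₀, hw₁, rfl⟩ := hx
  refine ⟨(s : Set ι).indicator w, fun i => ?_, ?_, ?_⟩
  · by_cases hi : i ∈ s <;> simp [hi, hw₀]
  · rw [← hw₁, ← Fintype.sum_extend_by_zero s w]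
    simp [Set.indicator_apply]
  · rw [Finset.affineCombination_indicator_subset w p s.subset_univ,
      Finset.affineCombination_eq_linear_combination]
    rw [← hw₁, ← Fintype.sum_extend_by_zero s w]
    simp [Set.indicator_apply]

theorem mul_norm_le_of_closedBall_subset_convexHull {s : Set V} {r e : ℝ} {N : V} (hr : 0 ≤ r)
    (hball : closedBall 0 r ⊆ convexHull ℝ s) (hs : ∀ p ∈ s, ⟪N, p⟫ ≤ e) : r * ‖N‖ ≤ e := by
  have hhull : convexHull ℝ s ⊆ {p | ⟪N, p⟫ ≤ e} :=
    convexHull_min hs (convex_halfSpace_le (innerₛₗ ℝ N).isLinear e)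
  rcases eq_or_ne N 0 with rfl | hN
  · simpa using hhull (hball (mem_closedBall_self hr))
  have hmem : (r / ‖N‖) • N ∈ closedBall (0 : V) r := by
    rw [mem_closedBall_zero_iff, norm_smul, Real.norm_eq_abs, abs_div, abs_norm, abs_of_nonneg hr,
      div_mul_cancel₀ _ (norm_ne_zero_iff.2 hN)]
  have := hhull (hball hmem)
  rw [mem_ofPred_eq, real_inner_smul_right, real_inner_self_eq_norm_sq] at this
  convert this using 1
  field_simp

structure IsCenteredEquilateral (p : Fin 3 → V) : Prop where
  norm_eq_one : ∀ a, ‖p a‖ = 1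
  inner_eq : Pairwise fun a b => ⟪p a, p b⟫ = -(1 / 2)

namespace IsCenteredEquilateral

variable {p : Fin 3 → V}

theorem neg_half_le_inner (hp : IsCenteredEquilateral p) (a b : Fin 3) : -(1 / 2) ≤ ⟪p a, p b⟫ := by
  rcases eq_or_ne a b with rfl | hab
  · rw [real_inner_self_eq_norm_sq, hp.norm_eq_one]; norm_num
  · rw [hp.inner_eq hab]

theorem injective (hp : IsCenteredEquilateral p) : Injective p := fun a b h => by
  by_contra hab
  have : ⟪p a, p b⟫ = -(1 / 2) := hp.inner_eq hab
  rw [h, real_inner_self_eq_norm_sq, hp.norm_eq_one] at this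
  norm_num at this

theorem inner_sum_smul (hp : IsCenteredEquilateral p) {w : Fin 3 → ℝ} (hw : ∑ a, w a = 1)
    (b : Fin 3) : ⟪p b, ∑ a, w a • p a⟫ = (3 * w b - 1) / 2 := by
  rw [inner_sum, ← Finset.add_sum_erase _ _ (Finset.mem_univ b),
    Finset.sum_congr rfl fun a ha => by
      rw [real_inner_smul_right, hp.inner_eq (Finset.ne_of_mem_erase ha).symm],
    ← Finset.sum_mul, Finset.sum_erase_eq_sub (Finset.mem_univ b), hw, real_inner_smul_right,
    real_inner_self_eq_norm_sq, hp.norm_eq_one]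
  ring

end IsCenteredEquilateral

theorem norm_sum_smul_fin_three_sq (w : Fin 3 → ℝ) (q : Fin 3 → V) :
    ‖∑ a, w a • q a‖ ^ 2 = ((w 0 * ‖q 0‖ - w 1 * ‖q 1‖) ^ 2 + (w 0 * ‖q 0‖ - w 2 * ‖q 2‖) ^ 2
        + (w 1 * ‖q 1‖ - w 2 * ‖q 2‖) ^ 2) / 2
      + 2 * (w 0 * w 1 * (⟪q 0, q 1⟫ + ‖q 0‖ * ‖q 1‖ / 2)
        + w 0 * w 2 * (⟪q 0, q 2⟫ + ‖q 0‖ * ‖q 2‖ / 2)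
        + w 1 * w 2 * (⟪q 1, q 2⟫ + ‖q 1‖ * ‖q 2‖ / 2)) := by
  rw [← real_inner_self_eq_norm_sq]
  simp only [Fin.sum_univ_three, inner_add_left, inner_add_right, real_inner_smul_left,
    real_inner_smul_right, real_inner_self_eq_norm_sq, norm_smul, mul_pow, Real.norm_eq_abs, sq_abs]
  rw [real_inner_comm (q 0) (q 1), real_inner_comm (q 0) (q 2), real_inner_comm (q 1) (q 2)]
  ring

theorem inner_eq_neg_mul_norm_div_two_of_sum_smul_eq_zero {q : Fin 3 → V} {w : Fin 3 → ℝ}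
    (hw₀ : ∀ a, 0 ≤ w a) (hw₁ : ∑ a, w a = 1) (hq : ∑ a, w a • q a = 0) (hq₀ : ∀ a, q a ≠ 0)
    (hangle : Pairwise fun a b => -(‖q a‖ * ‖q b‖ / 2) ≤ ⟪q a, q b⟫) :
    Pairwise fun a b => ⟪q a, q b⟫ = -(‖q a‖ * ‖q b‖ / 2) := by
  have hsum := norm_sum_smul_fin_three_sq w q
  rw [hq, norm_zero, zero_pow two_ne_zero] at hsum
  have hterm : ∀ a b, a ≠ b → 0 ≤ w a * w b * (⟪q a, q b⟫ + ‖q a‖ * ‖q b‖ / 2) := fun a b hab =>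
    mul_nonneg (mul_nonneg (hw₀ a) (hw₀ b)) (by linarith [hangle hab])
  have h₀₁ := hterm 0 1 (by decide)
  have h₀₂ := hterm 0 2 (by decide)
  have h₁₂ := hterm 1 2 (by decide)
  have hsq₁ : (w 0 * ‖q 0‖ - w 1 * ‖q 1‖) ^ 2 = 0 := by
    nlinarith [sq_nonneg (w 0 * ‖q 0‖ - w 2 * ‖q 2‖), sq_nonneg (w 1 * ‖q 1‖ - w 2 * ‖q 2‖)]
  have hsq₂ : (w 0 * ‖q 0‖ - w 2 * ‖q 2‖) ^ 2 = 0 := by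
    nlinarith [sq_nonneg (w 0 * ‖q 0‖ - w 1 * ‖q 1‖), sq_nonneg (w 1 * ‖q 1‖ - w 2 * ‖q 2‖)]
  have hc : ∀ a, w a * ‖q a‖ = w 0 * ‖q 0‖ := by
    intro a
    fin_cases a
    exacts [rfl, (sub_eq_zero.1 (pow_eq_zero_iff two_ne_zero |>.1 hsq₁)).symm,
      (sub_eq_zero.1 (pow_eq_zero_iff two_ne_zero |>.1 hsq₂)).symm]
  have hwpos : ∀ a, 0 < w a := by
    intro a
    refine (hw₀ a).lt_of_ne' fun ha => ?_
    have hzero : ∀ b, w b = 0 := fun b => by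
      have := (hc b).trans ((hc a).symm.trans (by rw [ha, zero_mul]))
      exact (mul_eq_zero.1 this).resolve_right (norm_ne_zero_iff.2 (hq₀ b))
    simp [hzero] at hw₁
  have hslack : ∀ a b, w a * w b * (⟪q a, q b⟫ + ‖q a‖ * ‖q b‖ / 2) = 0 →
      ⟪q a, q b⟫ = -(‖q a‖ * ‖q b‖ / 2) := fun a b h => by
    linarith [(mul_eq_zero.1 h).resolve_left (mul_pos (hwpos a) (hwpos b)).ne']
  have hsymm : Std.Symm fun a b => ⟪q a, q b⟫ = -(‖q a‖ * ‖q b‖ / 2) :=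
    ⟨fun a b h => by rwa [real_inner_comm, mul_comm]⟩
  have := sq_nonneg (w 1 * ‖q 1‖ - w 2 * ‖q 2‖)
  exact Fin.pairwise_three hsymm (hslack 0 1 (by linarith)) (hslack 0 2 (by linarith))
    (hslack 1 2 (by linarith))

theorem isCenteredEquilateral_of_sum_smul_eq_zero {q : Fin 3 → V} {w : Fin 3 → ℝ}
    (hw₀ : ∀ a, 0 ≤ w a) (hw₁ : ∑ a, w a = 1) (hq : ∑ a, w a • q a = 0)
    (hnorm : ∀ a, ‖q a‖ ≤ 1) (hpair : Pairwise fun a b => 1 / 2 ≤ ‖q a‖ * ‖q b‖ + ⟪q a, q b⟫) :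
    IsCenteredEquilateral q := by
  have hq₀ : ∀ a, q a ≠ 0 := fun a h => by
    obtain ⟨b, hb⟩ := exists_ne a
    have : 1 / 2 ≤ ‖q a‖ * ‖q b‖ + ⟪q a, q b⟫ := hpair hb.symm
    rw [h, norm_zero, zero_mul, inner_zero_left, add_zero] at this
    norm_num at this
  have hprod : Pairwise fun a b => ‖q a‖ * ‖q b‖ ≤ 1 := fun a b _ =>
    mul_le_one₀ (hnorm a) (norm_nonneg _) (hnorm b)
  have heq := inner_eq_neg_mul_norm_div_two_of_sum_smul_eq_zero hw₀ hw₁ hq hq₀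
    fun a b hab => by linarith [hpair hab, hprod hab]
  have hnorm₁ : ∀ a, ‖q a‖ = 1 := fun a => by
    obtain ⟨b, hb⟩ := exists_ne a
    have : 1 / 2 ≤ ‖q a‖ * ‖q b‖ + ⟪q a, q b⟫ := hpair hb.symm
    rw [heq hb.symm] at this
    nlinarith [hnorm a, hnorm b, norm_nonneg (q a)]
  refine ⟨hnorm₁, fun a b hab => ?_⟩
  beta_reduce
  rw [heq hab, hnorm₁, hnorm₁]
  norm_num

section TwoDim

variable [Fact (finrank ℝ V = 2)]

attribute [local instance] FiniteDimensional.of_fact_finrank_eq_two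

theorem exists_orientation : Nonempty (Orientation ℝ V (Fin 2)) :=
  ⟨(Module.finBasisOfFinrankEq ℝ V Fact.out).orientation⟩

namespace Orientation

variable (o : Orientation ℝ V (Fin 2))

local notation "ω" => o.areaForm
local notation "J" => o.rightAngleRotation

theorem mul_norm_sub_le_abs_areaForm {q : Fin 3 → V} {r : ℝ} (hr : 0 ≤ r)
    (hball : closedBall 0 r ⊆ convexHull ℝ (range q)) {a b : Fin 3} (hab : a ≠ b) :
    r * ‖q b - q a‖ ≤ |ω (q a) (q b)| := by
  set N := J (q b - q a)
  have hNa : ⟪N, q a⟫ = -ω (q a) (q b) := by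
    rw [o.inner_rightAngleRotation_left, map_sub, LinearMap.sub_apply, o.areaForm_apply_self,
      o.areaForm_swap, sub_zero]
  have hNb : ⟪N, q b⟫ = ⟪N, q a⟫ := by
    rw [hNa, o.inner_rightAngleRotation_left, map_sub, LinearMap.sub_apply, o.areaForm_apply_self,
      zero_sub]
  have hN : ‖N‖ = ‖q b - q a‖ := LinearIsometryEquiv.norm_map _ _
  rw [← hN]
  -- the line through `q a` and `q b` leaves the third vertex, hence the whole triangle, on one side
  by_cases hside : ∀ c, ⟪N, q c⟫ ≤ ⟪N, q a⟫
  · calc r * ‖N‖ ≤ ⟪N, q a⟫ :=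
          mul_norm_le_of_closedBall_subset_convexHull hr hball (forall_mem_range.2 hside)
      _ ≤ |ω (q a) (q b)| := by rw [hNa]; exact neg_le_abs _
  · push Not at hside
    obtain ⟨c, hc⟩ := hside
    have hca : c ≠ a := by rintro rfl; exact lt_irrefl _ hc
    have hcb : c ≠ b := by rintro rfl; exact hc.ne hNb.symm
    have hside' : ∀ d, ⟪-N, q d⟫ ≤ -⟪N, q a⟫ := by
      intro d
      rw [inner_neg_left, neg_le_neg_iff]
      by_cases hda : d = a
      · rw [hda]
      by_cases hdb : d = b
      · rw [hdb, hNb]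
      obtain rfl : d = c := by omega
      exact hc.le
    calc r * ‖N‖ = r * ‖-N‖ := by rw [norm_neg]
      _ ≤ -⟪N, q a⟫ :=
          mul_norm_le_of_closedBall_subset_convexHull hr hball (forall_mem_range.2 hside')
      _ ≤ |ω (q a) (q b)| := by rw [hNa, neg_neg]; exact le_abs_self _

end Orientation

theorem two_mul_sq_le_norm_mul_norm_add_inner {q : Fin 3 → V} (hq : Injective q) {r : ℝ}
    (hr : 0 ≤ r) (hball : closedBall 0 r ⊆ convexHull ℝ (range q)) {a b : Fin 3} (hab : a ≠ b) :
    2 * r ^ 2 ≤ ‖q a‖ * ‖q b‖ + ⟪q a, q b⟫ := by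
  obtain ⟨o⟩ := exists_orientation (V := V)
  have hedge := o.mul_norm_sub_le_abs_areaForm hr hball hab
  have hω := o.inner_sq_add_areaForm_sq (q a) (q b)
  have hsub := norm_sub_sq_real (q b) (q a)
  rw [real_inner_comm] at hsub
  have hne : 0 < ‖q b - q a‖ := norm_sub_pos_iff.2 (hq.ne hab.symm)
  have hcs := real_inner_le_norm (q a) (q b)
  have hsq : r ^ 2 * ‖q b - q a‖ ^ 2
      ≤ (‖q a‖ * ‖q b‖ - ⟪q a, q b⟫) * (‖q a‖ * ‖q b‖ + ⟪q a, q b⟫) := by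
    have := pow_le_pow_left₀ (by positivity) hedge 2
    rw [mul_pow, sq_abs] at this
    nlinarith
  have hamgm : 2 * (‖q a‖ * ‖q b‖ - ⟪q a, q b⟫) ≤ ‖q b - q a‖ ^ 2 := by
    nlinarith [sq_nonneg (‖q a‖ - ‖q b‖)]
  rcases hcs.lt_or_eq with hlt | heq
  · have hpos : 0 < ‖q a‖ * ‖q b‖ - ⟪q a, q b⟫ := by linarith
    nlinarith
  · rw [heq, sub_self, zero_mul] at hsq
    obtain rfl : r = 0 := by
      by_contra hr0
      linarith [mul_pos (pow_pos (hr.lt_of_ne' hr0) 2) (pow_pos hne 2)]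
    nlinarith [norm_nonneg (q a), norm_nonneg (q b)]

theorem isCenteredEquilateral_of_closedBall_subset_convexHull {q : Fin 3 → V}
    (hq : Injective q) (hball : closedBall 0 (1 / 2) ⊆ convexHull ℝ (range q))
    (hdisk : convexHull ℝ (range q) ⊆ closedBall 0 1) : IsCenteredEquilateral q := by
  obtain ⟨w, hw₀, hw₁, hw⟩ :=
    exists_sum_smul_eq_of_mem_convexHull_range (hball (mem_closedBall_self (by norm_num)))
  refine isCenteredEquilateral_of_sum_smul_eq_zero hw₀ hw₁ hw (fun a => ?_) fun a b hab => ?_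
  · simpa using hdisk (subset_convexHull ℝ _ (mem_range_self a))
  · have := two_mul_sq_le_norm_mul_norm_add_inner hq (by norm_num) hball hab
    norm_num at this
    linarith

theorem inner_eq_neg_half_of_inner_eq {x y z : V} (hx : ‖x‖ = 1) (hy : ‖y‖ = 1) (hz : ‖z‖ = 1)
    (hxy : x ≠ y) (hxz : ⟪x, z⟫ = ⟪x, y⟫) (hyz : ⟪y, z⟫ = ⟪x, y⟫) :
    ⟪x, y⟫ = -(1 / 2) := by
  obtain ⟨o⟩ := exists_orientation (V := V)
  have h₁ := o.inner_mul_inner_add_areaForm_mul_areaForm x y z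
  have h₂ := o.inner_sq_add_areaForm_sq x y
  have h₃ := o.inner_sq_add_areaForm_sq x z
  rw [hxz, hyz, hx, one_pow, one_mul] at h₁
  rw [hx, hy] at h₂
  rw [hxz, hx, hz] at h₃
  set t := ⟪x, y⟫
  have hfac : (t - 1) ^ 2 * (2 * t + 1) = 0 := by
    linear_combination (-(1 - t ^ 2)) * h₂ - (o.areaForm x y) ^ 2 * h₃
      + (t - t ^ 2 + o.areaForm x y * o.areaForm x z) * h₁
  have ht : t < 1 := (inner_lt_one_iff_real_of_norm_eq_one hx hy).2 hxy
  have := (mul_eq_zero.1 hfac).resolve_left (pow_ne_zero 2 (sub_ne_zero.2 ht.ne))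
  linarith

theorem eq_zero_or_eq_zero_of_inner_eq_zero {g u v : V} (hg : g ≠ 0) (hu : ⟪g, u⟫ = 0)
    (hv : ⟪g, v⟫ = 0) (huv : ⟪u, v⟫ = 0) : u = 0 ∨ v = 0 := by
  obtain ⟨o⟩ := exists_orientation (V := V)
  have h₁ := o.inner_mul_inner_add_areaForm_mul_areaForm g u v
  have h₂ := o.inner_sq_add_areaForm_sq g u
  have h₃ := o.inner_sq_add_areaForm_sq g v
  rw [hu, hv, huv] at h₁
  rw [hu] at h₂
  rw [hv] at h₃
  have hg' : ‖g‖ ^ 2 ≠ 0 := pow_ne_zero 2 (norm_ne_zero_iff.2 hg)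
  have : (‖g‖ ^ 2 * ‖u‖ ^ 2) * (‖g‖ ^ 2 * ‖v‖ ^ 2) = 0 := by
    linear_combination (-h₂) * (o.areaForm g v) ^ 2 - ‖g‖ ^ 2 * ‖u‖ ^ 2 * h₃
      + (o.areaForm g u * o.areaForm g v) * h₁
  simpa [hg'] using this

theorem eq_or_add_add_eq_zero_of_inner_eq_neg_half {g x y : V} (hg : ‖g‖ = 1) (hx : ‖x‖ = 1)
    (hxg : ⟪x, g⟫ = -(1 / 2)) (hy : ‖y‖ = 1) (hyg : ⟪y, g⟫ = -(1 / 2)) :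
    y = x ∨ x + y + g = 0 := by
  have hg₀ : g ≠ 0 := norm_ne_zero_iff.1 (by rw [hg]; norm_num)
  have := eq_zero_or_eq_zero_of_inner_eq_zero (u := y - x) (v := x + y + g) hg₀ ?_ ?_ ?_
  · simpa [sub_eq_zero] using this
  · rw [inner_sub_right, real_inner_comm, hyg, real_inner_comm, hxg, sub_self]
  · rw [inner_add_right, inner_add_right, real_inner_comm, hxg, real_inner_comm, hyg,
      real_inner_self_eq_norm_sq, hg]
    norm_num
  · rw [inner_sub_left, inner_add_right, inner_add_right, inner_add_right, inner_add_right,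
      real_inner_self_eq_norm_sq, real_inner_self_eq_norm_sq, hx, hy, hxg, hyg, real_inner_comm x y]
    ring

namespace IsCenteredEquilateral

variable {p : Fin 3 → V}

theorem convexHull_eq (hp : IsCenteredEquilateral p) (hind : AffineIndependent ℝ p) :
    convexHull ℝ (range p) = {x | ∀ a, -(1 / 2) ≤ ⟪p a, x⟫} := by
  refine (convexHull_min ?_ ?_).antisymm fun x hx => ?_
  · rintro _ ⟨b, rfl⟩ a
    exact hp.neg_half_le_inner a b
  · simp only [ofPred_forall]
    exact convex_iInter fun a => convex_halfSpace_ge (innerₛₗ ℝ (p a)).isLinear _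
  -- every point is an affine combination of the vertices, whose weights the inner products read off
  have hspan : affineSpan ℝ (range p) = ⊤ :=
    hind.affineSpan_eq_top_iff_card_eq_finrank_add_one.2 (by simp [(Fact.out : finrank ℝ V = 2)])
  obtain ⟨w, hw₁, rfl⟩ :=
    eq_affineCombination_of_mem_affineSpan_of_fintype (hspan ▸ AffineSubspace.mem_top ℝ V x)
  refine affineCombination_mem_convexHull (fun b _ => ?_) hw₁
  have := hx b
  rw [Finset.affineCombination_eq_linear_combination _ _ _ hw₁, hp.inner_sum_smul hw₁] at this
  linarith

theorem closedBall_subset_convexHull (hp : IsCenteredEquilateral p)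
    (hind : AffineIndependent ℝ p) : closedBall 0 (1 / 2) ⊆ convexHull ℝ (range p) := by
  rw [hp.convexHull_eq hind]
  intro x hx a
  have := neg_le_of_abs_le (abs_real_inner_le_norm (p a) x)
  rw [hp.norm_eq_one, one_mul] at this
  linarith [mem_closedBall_zero_iff.1 hx]

theorem range_subset_of_apply_eq {r : Fin 3 → V} (hp : IsCenteredEquilateral p)
    (hr : IsCenteredEquilateral r) {a b : Fin 3} (hab : p a = r b) : range p ⊆ range r := by
  rintro _ ⟨c, rfl⟩
  rcases eq_or_ne c a with rfl | hca
  · exact ⟨b, hab.symm⟩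
  obtain ⟨b₁, b₂, hb₁, hb₂, hb₁₂⟩ :=
    (by decide : ∀ b : Fin 3, ∃ b₁ b₂ : Fin 3, b₁ ≠ b ∧ b₂ ≠ b ∧ b₁ ≠ b₂) b
  have hc : ⟪p c, r b⟫ = -(1 / 2) := hab ▸ hp.inner_eq hca
  have companion (y : V) := eq_or_add_add_eq_zero_of_inner_eq_neg_half (y := y)
    (hr.norm_eq_one b) (hr.norm_eq_one b₁) (hr.inner_eq hb₁)
  rcases companion _ (hp.norm_eq_one c) hc with h | h
  · exact ⟨b₁, h.symm⟩
  rcases companion _ (hr.norm_eq_one b₂) (hr.inner_eq hb₂) with h' | h'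
  · exact absurd (hr.injective h') hb₁₂.symm
  exact ⟨b₂, add_left_cancel (add_right_cancel (h'.trans h.symm))⟩

theorem range_eq_of_apply_eq {r : Fin 3 → V} (hp : IsCenteredEquilateral p)
    (hr : IsCenteredEquilateral r) {a b : Fin 3} (hab : p a = r b) : range p = range r :=
  (hp.range_subset_of_apply_eq hr hab).antisymm (hr.range_subset_of_apply_eq hp hab.symm)

end IsCenteredEquilateral

end TwoDim

end InnerProductSpace

theorem InscribedEquilateral.isCenteredEquilateral {p : Fin 3 → EuclideanSpace ℝ (Fin 2)}
    (hp : InscribedEquilateral p) : IsCenteredEquilateral p := by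
  obtain ⟨hind, hdist₀, hdist⟩ := hp
  have hnorm : ∀ a, ‖p a‖ = 1 := fun a => by simpa using hdist₀ a
  have hsq : ∀ a b, dist (p a) (p b) ^ 2 = 2 - 2 * ⟪p a, p b⟫ := fun a b => by
    rw [dist_eq_norm, norm_sub_sq_real, hnorm, hnorm]; ring
  have hinner : ∀ a b, a ≠ b → ⟪p a, p b⟫ = ⟪p 0, p 1⟫ := fun a b hab => by
    have := hsq a b
    rw [hdist a b hab, hsq 0 1] at this
    linarith
  have ht := inner_eq_neg_half_of_inner_eq (hnorm 0) (hnorm 1) (hnorm 2)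
    (hind.injective.ne (by decide)) (hinner 0 2 (by decide)) (hinner 1 2 (by decide))
  exact ⟨hnorm, fun a b hab => (hinner a b hab).trans ht⟩

theorem stmt_13_general {n : ℕ} (hn : 1 ≤ n) (v : Fin n → Fin 3 → EuclideanSpace ℝ (Fin 2))
    (hins : ∀ i, InscribedEquilateral (v i))
    (S : Set (EuclideanSpace ℝ (Fin 2)))
    (hS : S = Set.extremePoints ℝ (⋂ i, convexHull ℝ (Set.range (v i))))
    (q : Fin 3 → EuclideanSpace ℝ (Fin 2)) (hq : AffineIndependent ℝ q)
    (hSq : S ⊆ convexHull ℝ (Set.range q))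
    (hqC : convexHull ℝ (Set.range q) ⊆ closedBall (0 : EuclideanSpace ℝ (Fin 2)) 1) :
    ∃ i, convexHull ℝ (Set.range q) = convexHull ℝ (Set.range (v i)) := by
  have hv : ∀ i, IsCenteredEquilateral (v i) := fun i => (hins i).isCenteredEquilateral
  set K := ⋂ i, convexHull ℝ (range (v i))
  have hKcompact : IsCompact K :=
    ((finite_range (v ⟨0, hn⟩)).isCompact_convexHull (𝕜 := ℝ)).of_isClosed_subset
      (isClosed_iInter fun i => (finite_range (v i)).isClosed_convexHull ℝ) (iInter_subset _ _)
  have hKq : K ⊆ convexHull ℝ (range q) :=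
    hKcompact.subset_of_extremePoints_subset (convex_iInter fun i => convex_convexHull ℝ _)
      ((finite_range q).isClosed_convexHull ℝ) (convex_convexHull ℝ _) (hS ▸ hSq)
  have hballK : closedBall 0 (1 / 2) ⊆ K :=
    subset_iInter fun i => (hv i).closedBall_subset_convexHull (hins i).1
  have hqc := isCenteredEquilateral_of_closedBall_subset_convexHull hq.injective
    (hballK.trans hKq) hqC
  by_contra! hne
  have hlt : ∀ ia : Fin n × Fin 3, ⟪v ia.1 ia.2, q 0⟫ < 1 := fun ⟨i, a⟩ =>
    (inner_lt_one_iff_real_of_norm_eq_one ((hv i).norm_eq_one a) (hqc.norm_eq_one 0)).2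
      fun h => hne i (by rw [hqc.range_eq_of_apply_eq (hv i) h.symm])
  obtain ⟨c, hc, hcv⟩ := exists_half_lt_forall_mul_le_half hlt
  have hz : -c • q 0 ∈ K := mem_iInter.2 fun i => by
    rw [(hv i).convexHull_eq (hins i).1]
    intro a
    rw [real_inner_smul_right]
    linarith [hcv (i, a)]
  have := (hqc.convexHull_eq hq ▸ hKq hz) 0
  rw [real_inner_smul_right, real_inner_self_eq_norm_sq, hqc.norm_eq_one] at this
  linarith

/-- if T₁, …, Tₙ are distinct equilateral triangles inscribed in the unit
circle and S is the vertex set (extreme points) of ∩ᵢ Tᵢ, then any triangle T with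
S ⊆ T ⊆ C (the closed unit disk) is one of the Tᵢ. -/
theorem stmt_13 {n : ℕ} (hn : 1 ≤ n) (v : Fin n → Fin 3 → EuclideanSpace ℝ (Fin 2))
    (hins : ∀ i, InscribedEquilateral (v i))
    (hdist : ∀ i j, i ≠ j →
      convexHull ℝ (Set.range (v i)) ≠ convexHull ℝ (Set.range (v j)))
    (S : Set (EuclideanSpace ℝ (Fin 2)))
    (hS : S = Set.extremePoints ℝ (⋂ i, convexHull ℝ (Set.range (v i))))
    (q : Fin 3 → EuclideanSpace ℝ (Fin 2)) (hq : AffineIndependent ℝ q)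
    (hSq : S ⊆ convexHull ℝ (Set.range q))
    (hqC : convexHull ℝ (Set.range q) ⊆ closedBall (0 : EuclideanSpace ℝ (Fin 2)) 1) :
    ∃ i, convexHull ℝ (Set.range q) = convexHull ℝ (Set.range (v i)) :=
  stmt_13_general hn v hins S hS q hq hSq hqC
end

section
/- Let T₁, …, Tₙ be n ≥ 2 distinct equilateral triangles inscribed in the unit circle and let S be the vertex set of the polygon ∩ᵢ Tᵢ. Then each edge of each triangle Tᵢ contains exactly 2 points of S, each point of S lies on the edges of exactly two distinct triangles among T₁, …, Tₙ, and consequently |S| = 3n. -/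
/-!
An equilateral triangle inscribed in the unit circle with vertices `p a` is the set
`{x | ∀ a, -1/2 ≤ ⟪p a, x⟫}`: its sides are tangent to the circle of radius `1/2`, with the
vertices as inward normals. Hence `⋂ᵢ Tᵢ` is the polygon cut out by the half-planes
`-1/2 ≤ ⟪u, x⟫`, `u` running over the `3n` vertices, which are pairwise distinct because two
inscribed equilateral triangles sharing a vertex coincide. In the plane, a point of such a polygon
is a vertex iff it lies on two of the side lines, and it lies on at most two of them (a point has
only two tangents to a circle). Each side line touches the disk of radius `1/2` at a point on no
other side line, so it carries a side of positive length with exactly two vertices. Double counting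
the vertex–line incidences gives `|S| = 3n`. The two lines through a vertex belong to different
triangles: otherwise the point would be the third vertex of that triangle, on the unit circle, and
hence a vertex of every other triangle too.
-/

open Metric

open Set Filter Topology Function RealInnerProductSpace Module

section TwoDim

variable {E : Type*} [NormedAddCommGroup E] [InnerProductSpace ℝ E]

theorem linearIndependent_pair_of_inner_eq {u w x : E} {c : ℝ} (hc : c ≠ 0) (huw : u ≠ w)
    (hu : ⟪u, x⟫ = c) (hw : ⟪w, x⟫ = c) : LinearIndependent ℝ ![u, w] := by
  refine LinearIndependent.pair_iff.mpr fun s t hst => ?_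
  have hsum : (s + t) * c = 0 := by
    have := congrArg (⟪·, x⟫) hst
    simp only [inner_add_left, real_inner_smul_left, hu, hw, inner_zero_left] at this
    linarith
  obtain rfl : t = -s := by linarith [(mul_eq_zero.mp hsum).resolve_right hc]
  have hs : s = 0 := by
    refine (smul_eq_zero.mp ?_).resolve_right (sub_ne_zero.mpr huw)
    rwa [smul_sub, sub_eq_add_neg, ← neg_smul]
  exact ⟨hs, by simp [hs]⟩

theorem linearIndependent_pair_of_inner_eq_zero {u w : E} (hu : u ≠ 0) (hw : w ≠ 0)
    (huw : ⟪u, w⟫ = 0) : LinearIndependent ℝ ![u, w] := by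
  refine linearIndependent_of_ne_zero_of_inner_eq_zero ?_ ?_
  · intro i; fin_cases i <;> simpa
  · intro i j hij
    fin_cases i <;> fin_cases j <;> simp_all [real_inner_comm]

theorem eq_zero_of_inner_eq_of_affineSpan_eq_top {ι : Type*} {p : ι → E}
    (hp : affineSpan ℝ (range p) = ⊤) {y : E} (hy : ∀ a b, ⟪p a, y⟫ = ⟪p b, y⟫) : y = 0 := by
  have hle : vectorSpan ℝ (range p) ≤ (ℝ ∙ y)ᗮ := by
    refine Submodule.span_le.mpr ?_
    rintro _ ⟨_, ⟨a, rfl⟩, _, ⟨b, rfl⟩, rfl⟩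
    rw [SetLike.mem_coe, Submodule.mem_orthogonal_singleton_iff_inner_right, real_inner_comm]
    simp only [vsub_eq_sub, inner_sub_left, hy a b, sub_self]
  rw [← direction_affineSpan, hp, AffineSubspace.direction_top] at hle
  exact inner_self_eq_zero.mp (Submodule.mem_orthogonal_singleton_iff_inner_right.mp
    (hle Submodule.mem_top))

variable [Fact (finrank ℝ E = 2)]

attribute [local instance] FiniteDimensional.of_fact_finrank_eq_two

theorem eq_zero_of_inner_eq_zero_of_linearIndependent {u w r : E}
    (huw : LinearIndependent ℝ ![u, w]) (hu : ⟪u, r⟫ = 0) (hw : ⟪w, r⟫ = 0) : r = 0 := by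
  have hspan := huw.span_eq_top_of_card_eq_finrank (by simp [(Fact.out : finrank ℝ E = 2)])
  obtain ⟨c, hc⟩ :=
    (Submodule.mem_span_range_iff_exists_fun ℝ).mp (hspan ▸ Submodule.mem_top (x := r))
  rw [← inner_self_eq_zero (𝕜 := ℝ)]
  nth_rewrite 1 [← hc]
  simp [Fin.sum_univ_two, inner_add_left, real_inner_smul_left, hu, hw]

theorem exists_ne_zero_inner_eq_zero (u : E) : ∃ d : E, d ≠ 0 ∧ ⟪u, d⟫ = 0 := by
  have hrank := (ℝ ∙ u).finrank_add_finrank_orthogonal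
  have hle : finrank ℝ (ℝ ∙ u) ≤ 1 := by simpa using finrank_span_le_card ({u} : Set E)
  obtain ⟨⟨d, hd⟩, hd0⟩ := finrank_pos_iff_exists_ne_zero.mp (show 0 < finrank ℝ (ℝ ∙ u)ᗮ by
    rw [(Fact.out : finrank ℝ E = 2)] at hrank; omega)
  exact ⟨d, by simpa using hd0, Submodule.mem_orthogonal_singleton_iff_inner_right.mp hd⟩

theorem eq_or_eq_of_inner_eq {x u₁ u₂ u₃ : E} {c : ℝ} (hc : c ≠ 0) (h₁ : ‖u₁‖ = 1)
    (h₂ : ‖u₂‖ = 1) (h₃ : ‖u₃‖ = 1) (h₁₂ : u₁ ≠ u₂) (hx₁ : ⟪u₁, x⟫ = c) (hx₂ : ⟪u₂, x⟫ = c)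
    (hx₃ : ⟪u₃, x⟫ = c) : u₃ = u₁ ∨ u₃ = u₂ := by
  have hx : x ≠ 0 := by rintro rfl; simp at hx₁; exact hc hx₁.symm
  set a := u₂ - u₁ with ha
  have ha0 : a ≠ 0 := sub_ne_zero.mpr h₁₂.symm
  have hxa : ⟪x, a⟫ = 0 := by rw [real_inner_comm, inner_sub_left, hx₁, hx₂, sub_self]
  have hxb : ⟪x, u₃ - u₁⟫ = 0 := by rw [real_inner_comm, inner_sub_left, hx₁, hx₃, sub_self]
  obtain ⟨t, ht⟩ := Submodule.mem_span_singleton.mp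
    (Submodule.mem_span_singleton_of_inner_eq_zero_of_inner_eq_zero hx ha0 hxb hxa)
  have hu₃ : u₃ = u₁ + t • a := by rw [ht]; abel
  have hu₂ : u₂ = u₁ + a := by rw [ha]; abel
  have hsq : ∀ s : ℝ, ‖u₁ + s • a‖ ^ 2 = 1 + 2 * s * ⟪u₁, a⟫ + s ^ 2 * ‖a‖ ^ 2 := by
    intro s
    rw [norm_add_sq_real, h₁, real_inner_smul_right, norm_smul, mul_pow, Real.norm_eq_abs, sq_abs]
    ring
  have h2 := hsq 1
  have h3 := hsq t
  rw [one_smul, ← hu₂, h₂] at h2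
  rw [← hu₃, h₃] at h3
  have hfac : t * (t - 1) * ‖a‖ ^ 2 = 0 := by linear_combination (-1 : ℝ) * h3 + t * h2
  rcases mul_eq_zero.mp hfac with ht' | ha'
  · rcases mul_eq_zero.mp ht' with rfl | ht1
    · left; simp [hu₃]
    · right; rw [hu₃, hu₂, sub_eq_zero.mp ht1, one_smul]
  · exact absurd (pow_eq_zero_iff two_ne_zero |>.mp ha') (norm_ne_zero_iff.mpr ha0)

end TwoDim

section Polygon

variable {E : Type*} [NormedAddCommGroup E] [InnerProductSpace ℝ E] {U : Set E} {u x d : E}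

def tangentPolygon (U : Set E) : Set E := {x | ∀ u ∈ U, -(1 / 2 : ℝ) ≤ ⟪u, x⟫}

def activeNormals (U : Set E) (x : E) : Set E := {u ∈ U | ⟪u, x⟫ = -(1 / 2)}

theorem convex_tangentPolygon (U : Set E) : Convex ℝ (tangentPolygon U) := by
  simp only [tangentPolygon, ofPred_forall]
  exact convex_iInter₂ fun u _ => convex_halfSpace_ge (innerₛₗ ℝ u).isLinear _

theorem isClosed_tangentPolygon (U : Set E) : IsClosed (tangentPolygon U) := by
  simp only [tangentPolygon, ofPred_forall]
  exact isClosed_biInter fun u _ => isClosed_le continuous_const (by fun_prop)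

theorem exists_pos_add_smul_mem_tangentPolygon (hU : U.Finite) (hx : x ∈ tangentPolygon U)
    (hd : ∀ u ∈ activeNormals U x, ⟪u, d⟫ = 0) :
    ∃ s : ℝ, 0 < s ∧ x + s • d ∈ tangentPolygon U ∧ x - s • d ∈ tangentPolygon U := by
  have hnear : ∀ e : E, (∀ u ∈ activeNormals U x, ⟪u, e⟫ = 0) →
      ∀ᶠ s in 𝓝 (0 : ℝ), x + s • e ∈ tangentPolygon U := by
    intro e he
    refine (eventually_all_finite hU).mpr fun u hu => ?_
    rcases (hx u hu).eq_or_lt with hact | hlt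
    · refine Eventually.of_forall fun s => ?_
      rw [inner_add_right, real_inner_smul_right, he u ⟨hu, hact.symm⟩, ← hact]
      simp
    · have hcont : Continuous fun s : ℝ => ⟪u, x + s • e⟫ := by fun_prop
      exact ((hcont.tendsto 0).eventually (lt_mem_nhds (by simpa using hlt))).mono
        fun _ => le_of_lt
  have hneg := hnear (-d) fun u hu => by rw [inner_neg_right, hd u hu, neg_zero]
  obtain ⟨s, ⟨h₁, h₂⟩, hs⟩ := (((hnear d hd).and hneg).filter_mono nhdsWithin_le_nhds |>.and
    (self_mem_nhdsWithin (s := Ioi (0 : ℝ)))).exists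
  exact ⟨s, hs, h₁, by simpa [sub_eq_add_neg] using h₂⟩

theorem interior_tangentPolygon (hU : U.Finite) (hU0 : (0 : E) ∉ U) :
    interior (tangentPolygon U) = {x | ∀ u ∈ U, -(1 / 2 : ℝ) < ⟪u, x⟫} := by
  refine subset_antisymm (fun x hx u hu => ?_) (interior_maximal (fun x hx u hu => (hx u hu).le) ?_)
  · have hxK : ∀ᶠ s in 𝓝 (0 : ℝ), x - s • u ∈ tangentPolygon U := by
      have hcont : Continuous fun s : ℝ => x - s • u := by fun_prop
      exact hcont.tendsto' 0 x (by simp) |>.eventually (mem_interior_iff_mem_nhds.mp hx)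
    obtain ⟨s, hsK, hs⟩ := (hxK.filter_mono nhdsWithin_le_nhds |>.and
      (self_mem_nhdsWithin (s := Ioi (0 : ℝ)))).exists
    have hu0 : 0 < ‖u‖ := norm_pos_iff.mpr (ne_of_mem_of_not_mem hu hU0)
    have := hsK u hu
    rw [inner_sub_right, real_inner_smul_right, real_inner_self_eq_norm_sq] at this
    have : 0 < s * ‖u‖ ^ 2 := by positivity
    linarith
  · simp only [ofPred_forall]
    exact hU.isOpen_biInter fun u _ => isOpen_lt continuous_const (by fun_prop)

theorem frontier_tangentPolygon (hU : U.Finite) (hU0 : (0 : E) ∉ U) :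
    frontier (tangentPolygon U) = {x ∈ tangentPolygon U | (activeNormals U x).Nonempty} := by
  rw [(isClosed_tangentPolygon U).frontier_eq, interior_tangentPolygon hU hU0]
  ext x
  simp only [Set.mem_sdiff, mem_ofPred_eq, activeNormals, Set.Nonempty]
  push Not
  exact and_congr_right fun hx => ⟨fun ⟨u, hu, hle⟩ => ⟨u, hu, le_antisymm hle (hx u hu)⟩,
    fun ⟨u, hu, hact⟩ => ⟨u, hu, hact.le⟩⟩

theorem neg_half_smul_mem_tangentPolygon (hU1 : ∀ w ∈ U, ‖w‖ = 1) (hu : ‖u‖ = 1) :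
    -(1 / 2 : ℝ) • u ∈ tangentPolygon U := by
  intro w hw
  have := real_inner_le_norm w u
  rw [hU1 w hw, hu, one_mul] at this
  rw [real_inner_smul_right]
  linarith

theorem eq_of_mem_activeNormals_neg_half_smul (hU1 : ∀ w ∈ U, ‖w‖ = 1) (hu : ‖u‖ = 1) {w : E}
    (hw : w ∈ activeNormals U (-(1 / 2 : ℝ) • u)) : w = u := by
  have hwu := hw.2
  rw [real_inner_smul_right] at hwu
  exact (inner_eq_one_iff_of_norm_eq_one (hU1 w hw.1) hu).mp (show ⟪w, u⟫ = 1 by linarith)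

theorem exists_mem_inter_inner_lt {d : E} (hU : U.Finite) (hU1 : ∀ w ∈ U, ‖w‖ = 1)
    (hu : u ∈ U) (hud : ⟪u, d⟫ = 0) (hd : d ≠ 0) :
    ∃ y ∈ tangentPolygon U ∩ {x | ⟪u, x⟫ = -(1 / 2)},
      ∃ z ∈ tangentPolygon U ∩ {x | ⟪u, x⟫ = -(1 / 2)}, ⟪d, y⟫ < ⟪d, z⟫ := by
  have hu1 := hU1 u hu
  -- The side line of `u` touches the disk of radius `1 / 2` at `m`, which lies on no other side
  -- line, so the polygon contains a neighbourhood of `m` in that line.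
  set m := -(1 / 2 : ℝ) • u
  obtain ⟨s, hs, hplus, hminus⟩ := exists_pos_add_smul_mem_tangentPolygon hU
    (neg_half_smul_mem_tangentPolygon hU1 hu1)
    fun w hw => eq_of_mem_activeNormals_neg_half_smul hU1 hu1 hw ▸ hud
  have hline : ∀ t : ℝ, ⟪u, m + t • d⟫ = -(1 / 2) ∧ ⟪d, m + t • d⟫ = t * ‖d‖ ^ 2 := fun t => by
    simp only [m, inner_add_right, real_inner_smul_right, real_inner_self_eq_norm_sq, hu1, hud,
      real_inner_comm u d]
    constructor <;> ring
  rw [sub_eq_add_neg, ← neg_smul] at hminus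
  refine ⟨_, ⟨hminus, (hline _).1⟩, _, ⟨hplus, (hline _).1⟩, ?_⟩
  rw [(hline _).2, (hline _).2]
  have : 0 < s * ‖d‖ ^ 2 := by have := norm_pos_iff.mpr hd; positivity
  linarith

end Polygon

section PlanarPolygon

variable {E : Type*} [NormedAddCommGroup E] [InnerProductSpace ℝ E] [Fact (finrank ℝ E = 2)]
  {U : Set E} {u x : E}

attribute [local instance] FiniteDimensional.of_fact_finrank_eq_two

theorem mem_extremePoints_tangentPolygon {u w : E} (hx : x ∈ tangentPolygon U) (huw : u ≠ w)
    (hu : u ∈ activeNormals U x) (hw : w ∈ activeNormals U x) :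
    x ∈ (tangentPolygon U).extremePoints ℝ := by
  refine mem_extremePoints.mpr ⟨hx, fun x₁ hx₁ x₂ hx₂ hseg => ?_⟩
  obtain ⟨a, b, ha, hb, hab, rfl⟩ := hseg
  have hflat : ∀ u ∈ activeNormals U (a • x₁ + b • x₂), ⟪u, x₁ - x₂⟫ = 0 := by
    rintro u ⟨huU, hact⟩
    rw [inner_add_right, real_inner_smul_right, real_inner_smul_right] at hact
    have h₁ := hx₁ u huU
    have h₂ := hx₂ u huU
    rw [inner_sub_right]
    nlinarith [mul_nonneg ha.le (by linarith : (0:ℝ) ≤ ⟪u, x₁⟫ + 1 / 2),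
      mul_nonneg hb.le (by linarith : (0:ℝ) ≤ ⟪u, x₂⟫ + 1 / 2)]
  have h₁₂ : x₁ = x₂ := sub_eq_zero.mp <| eq_zero_of_inner_eq_zero_of_linearIndependent
    (linearIndependent_pair_of_inner_eq (by norm_num) huw hu.2 hw.2) (hflat u hu) (hflat w hw)
  subst h₁₂
  rw [← add_smul, hab, one_smul]
  exact ⟨rfl, rfl⟩

theorem exists_ne_mem_activeNormals (hU : U.Finite) (hx : x ∈ (tangentPolygon U).extremePoints ℝ) :
    ∃ u ∈ activeNormals U x, ∃ w ∈ activeNormals U x, u ≠ w := by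
  by_contra! hone
  obtain ⟨d, hd0, hd⟩ : ∃ d : E, d ≠ 0 ∧ ∀ u ∈ activeNormals U x, ⟪u, d⟫ = 0 := by
    by_cases hA : ∃ u₀, u₀ ∈ activeNormals U x
    · obtain ⟨u₀, hu₀⟩ := hA
      obtain ⟨d, hd0, hd⟩ := exists_ne_zero_inner_eq_zero u₀
      exact ⟨d, hd0, fun u hu => hone u₀ hu₀ u hu ▸ hd⟩
    · obtain ⟨d, hd0, -⟩ := exists_ne_zero_inner_eq_zero (0 : E)
      exact ⟨d, hd0, fun u hu => absurd ⟨u, hu⟩ hA⟩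
  obtain ⟨s, hs, hplus, hminus⟩ := exists_pos_add_smul_mem_tangentPolygon hU hx.1 hd
  have hmid : x ∈ openSegment ℝ (x - s • d) (x + s • d) :=
    ⟨1 / 2, 1 / 2, by norm_num, by norm_num, by norm_num, by module⟩
  have := (mem_extremePoints.mp hx).2 _ hminus _ hplus hmid
  exact hd0 <| (smul_eq_zero.mp (by simpa using this.1)).resolve_left hs.ne'

theorem ncard_activeNormals (hU : U.Finite) (hU1 : ∀ u ∈ U, ‖u‖ = 1)
    (hx : x ∈ (tangentPolygon U).extremePoints ℝ) : (activeNormals U x).ncard = 2 := by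
  obtain ⟨u, hu, w, hw, huw⟩ := exists_ne_mem_activeNormals hU hx
  refine Set.ncard_eq_two.mpr ⟨u, w, huw, subset_antisymm (fun v hv => ?_) ?_⟩
  · exact eq_or_eq_of_inner_eq (by norm_num) (hU1 u hu.1) (hU1 w hw.1) (hU1 v hv.1) huw hu.2 hw.2
      hv.2
  · exact insert_subset hu (singleton_subset_iff.mpr hw)

theorem mem_extremePoints_of_isMinOn {d y : E} (hU : U.Finite) (hu : u ∈ U) (hud : ⟪u, d⟫ = 0)
    (hd : d ≠ 0) (hy : y ∈ tangentPolygon U) (hyu : ⟪u, y⟫ = -(1 / 2))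
    (hmin : IsMinOn (⟪d, ·⟫) (tangentPolygon U ∩ {x | ⟪u, x⟫ = -(1 / 2)}) y) :
    y ∈ (tangentPolygon U).extremePoints ℝ := by
  by_contra hext
  have hd' : ∀ w ∈ activeNormals U y, ⟪w, d⟫ = 0 := fun w hw => by
    obtain rfl : w = u := by_contra fun hwu =>
      hext (mem_extremePoints_tangentPolygon hy hwu hw ⟨hu, hyu⟩)
    exact hud
  obtain ⟨s, hs, -, hminus⟩ := exists_pos_add_smul_mem_tangentPolygon hU hy hd'
  have hle : ⟪d, y⟫ ≤ ⟪d, y - s • d⟫ :=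
    hmin ⟨hminus, show ⟪u, y - s • d⟫ = _ by
      rw [inner_sub_right, real_inner_smul_right, hud, hyu]; ring⟩
  rw [inner_sub_right, real_inner_smul_right, real_inner_self_eq_norm_sq] at hle
  have : 0 < s * ‖d‖ ^ 2 := by have := norm_pos_iff.mpr hd; positivity
  linarith

theorem mem_segment_of_inner_le {d y z : E} (hud : LinearIndependent ℝ ![u, d])
    (hy : ⟪u, y⟫ = ⟪u, x⟫) (hz : ⟪u, z⟫ = ⟪u, x⟫) (hyx : ⟪d, y⟫ ≤ ⟪d, x⟫) (hxz : ⟪d, x⟫ ≤ ⟪d, z⟫)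
    (hyz : ⟪d, y⟫ < ⟪d, z⟫) : x ∈ segment ℝ y z := by
  have hpos : 0 < ⟪d, z⟫ - ⟪d, y⟫ := sub_pos.mpr hyz
  set a := (⟪d, z⟫ - ⟪d, x⟫) / (⟪d, z⟫ - ⟪d, y⟫) with ha
  set b := (⟪d, x⟫ - ⟪d, y⟫) / (⟪d, z⟫ - ⟪d, y⟫) with hb
  have hab : a + b = 1 := by rw [ha, hb]; field_simp; ring
  refine ⟨a, b, div_nonneg (by linarith) hpos.le, div_nonneg (by linarith) hpos.le, hab, ?_⟩
  refine sub_eq_zero.mp (eq_zero_of_inner_eq_zero_of_linearIndependent hud ?_ ?_)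
  · rw [inner_sub_right, inner_add_right, real_inner_smul_right, real_inner_smul_right, hy, hz]
    linear_combination ⟪u, x⟫ * hab
  · rw [inner_sub_right, inner_add_right, real_inner_smul_right, real_inner_smul_right]
    rw [ha, hb]
    field_simp
    ring

theorem ncard_extremePoints_inter_eq_two (hU : U.Finite) (hU1 : ∀ u ∈ U, ‖u‖ = 1)
    (hK : Bornology.IsBounded (tangentPolygon U)) (hu : u ∈ U) :
    {x ∈ (tangentPolygon U).extremePoints ℝ | ⟪u, x⟫ = -(1 / 2)}.ncard = 2 := by
  set F := tangentPolygon U ∩ {x | ⟪u, x⟫ = -(1 / 2)}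
  have hF : IsCompact F := isCompact_of_isClosed_isBounded
    ((isClosed_tangentPolygon U).inter (isClosed_eq (by fun_prop) continuous_const))
    (hK.subset inter_subset_left)
  obtain ⟨d, hd0, hud⟩ := exists_ne_zero_inner_eq_zero u
  obtain ⟨y₀, hy₀, z₀, hz₀, hlt₀⟩ := exists_mem_inter_inner_lt hU hU1 hu hud hd0
  obtain ⟨y₁, hy₁, hmin₁⟩ := hF.exists_isMinOn ⟨y₀, hy₀⟩ (f := (⟪d, ·⟫)) (by fun_prop)
  obtain ⟨y₂, hy₂, hmin₂⟩ := hF.exists_isMinOn ⟨y₀, hy₀⟩ (f := (⟪-d, ·⟫)) (by fun_prop)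
  have hmax₂ : ∀ x ∈ F, ⟪d, x⟫ ≤ ⟪d, y₂⟫ := fun x hx => by
    simpa [inner_neg_left] using hmin₂ hx
  have hlt : ⟪d, y₁⟫ < ⟪d, y₂⟫ := ((hmin₁ hy₀).trans_lt hlt₀).trans_le (hmax₂ z₀ hz₀)
  refine Set.ncard_eq_two.mpr ⟨y₁, y₂, fun h => hlt.ne (congrArg _ h), Set.ext fun x => ⟨?_, ?_⟩⟩
  · rintro ⟨hx, hxu⟩
    have hseg := mem_segment_of_inner_le
      (linearIndependent_pair_of_inner_eq_zero (norm_ne_zero_iff.mp (by simp [hU1 u hu])) hd0 hud)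
      (hy₁.2.trans hxu.symm) (hy₂.2.trans hxu.symm) (hmin₁ ⟨hx.1, hxu⟩) (hmax₂ x ⟨hx.1, hxu⟩) hlt
    rcases (mem_extremePoints_iff_forall_segment.mp hx).2 _ hy₁.1 _ hy₂.1 hseg with h | h
    · exact Or.inl h.symm
    · exact Or.inr h.symm
  · rintro (rfl | rfl)
    · exact ⟨mem_extremePoints_of_isMinOn hU hu hud hd0 hy₁.1 hy₁.2 hmin₁, hy₁.2⟩
    · exact ⟨mem_extremePoints_of_isMinOn hU hu (by rw [inner_neg_right, hud, neg_zero])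
        (neg_ne_zero.mpr hd0) hy₂.1 hy₂.2 hmin₂, hy₂.2⟩

theorem ncard_extremePoints_tangentPolygon (hU : U.Finite) (hU1 : ∀ u ∈ U, ‖u‖ = 1)
    (hK : Bornology.IsBounded (tangentPolygon U)) :
    ((tangentPolygon U).extremePoints ℝ).ncard = U.ncard := by
  classical
  set P := (tangentPolygon U).extremePoints ℝ
  have hP : P.Finite := by
    refine (hU.biUnion fun u hu => Set.finite_of_ncard_ne_zero (s := {x ∈ P | ⟪u, x⟫ = -(1 / 2)})
      (by rw [ncard_extremePoints_inter_eq_two hU hU1 hK hu]; norm_num)).subset fun x hx => ?_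
    obtain ⟨u, hu, -⟩ := exists_ne_mem_activeNormals hU hx
    exact mem_biUnion hu.1 ⟨hx, hu.2⟩
  have hcount := Finset.card_mul_eq_card_mul (s := hU.toFinset) (t := hP.toFinset) (m := 2)
    (n := 2) (fun u x => ⟪u, x⟫ = -(1 / 2)) (fun u hu => ?_) (fun x hx => ?_)
  · rw [Set.ncard_eq_toFinset_card _ hP, Set.ncard_eq_toFinset_card _ hU]
    omega
  · rw [← Set.ncard_coe_finset, Finset.coe_bipartiteAbove]
    simpa only [Set.Finite.mem_toFinset] using
      ncard_extremePoints_inter_eq_two hU hU1 hK (hU.mem_toFinset.mp hu)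
  · rw [← Set.ncard_coe_finset, Finset.coe_bipartiteBelow]
    simpa only [Set.Finite.mem_toFinset, activeNormals] using
      ncard_activeNormals hU hU1 (hP.mem_toFinset.mp hx)

end PlanarPolygon

theorem exists_ne_and_ne_fin_three (a b : Fin 3) : ∃ c, c ≠ a ∧ c ≠ b := by
  revert a b; decide

theorem sum_fin_three_of_ne {M : Type*} [AddCommMonoid M] (f : Fin 3 → M) {a b c : Fin 3}
    (hab : a ≠ b) (hac : a ≠ c) (hbc : b ≠ c) : ∑ i, f i = f a + f b + f c := by
  fin_cases a <;> fin_cases b <;> fin_cases c <;> simp_all [Fin.sum_univ_three] <;> abel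

local notation "ℝ²" => EuclideanSpace ℝ (Fin 2)

open scoped EuclideanSpace

namespace InscribedEquilateral

variable {p : Fin 3 → ℝ²} {a b c : Fin 3} {x : ℝ²}

theorem norm_eq_one (h : InscribedEquilateral p) (a : Fin 3) : ‖p a‖ = 1 := by simpa using h.2.1 a

theorem inner_self (h : InscribedEquilateral p) (a : Fin 3) : ⟪p a, p a⟫ = 1 := by
  rw [real_inner_self_eq_norm_sq, h.norm_eq_one, one_pow]

theorem affineSpan_eq_top (h : InscribedEquilateral p) : affineSpan ℝ (range p) = ⊤ := by
  rw [h.1.affineSpan_eq_top_iff_card_eq_finrank_add_one]; simp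

theorem inner_eq_inner_zero_one (h : InscribedEquilateral p) (hab : a ≠ b) :
    ⟪p a, p b⟫ = ⟪p 0, p 1⟫ := by
  have := congrArg (· ^ 2) (h.2.2 a b hab)
  simp only [dist_eq_norm, norm_sub_sq_real, h.norm_eq_one] at this
  linarith

theorem inner_sum (h : InscribedEquilateral p) (a : Fin 3) :
    ⟪p a, ∑ b, p b⟫ = 1 + 2 * ⟪p 0, p 1⟫ := by
  fin_cases a <;> simp [Fin.sum_univ_three, inner_add_right, h.norm_eq_one,
    h.inner_eq_inner_zero_one] <;> ring

theorem sum_eq_zero (h : InscribedEquilateral p) : ∑ a, p a = 0 :=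
  eq_zero_of_inner_eq_of_affineSpan_eq_top h.affineSpan_eq_top fun a b => by
    rw [h.inner_sum, h.inner_sum]

theorem inner_eq_neg_half (h : InscribedEquilateral p) (hab : a ≠ b) : ⟪p a, p b⟫ = -(1 / 2) := by
  have := h.inner_sum 0
  rw [h.sum_eq_zero, inner_zero_right] at this
  rw [h.inner_eq_inner_zero_one hab]
  linarith

theorem sum_inner_eq_zero (h : InscribedEquilateral p) (x : ℝ²) : ∑ a, ⟪p a, x⟫ = 0 := by
  rw [← sum_inner, h.sum_eq_zero, inner_zero_left]

theorem sum_weights_eq_one (h : InscribedEquilateral p) (x : ℝ²) :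
    ∑ a, (1 + 2 * ⟪p a, x⟫) / 3 = 1 := by
  rw [← Finset.sum_div, Finset.sum_add_distrib, ← Finset.mul_sum, h.sum_inner_eq_zero]
  norm_num

-- The coefficients are the barycentric coordinates of `x`: affine in `x`, summing to `1`, and
-- equal to `1` at `p a` and `0` at the other two vertices.
theorem eq_sum_smul (h : InscribedEquilateral p) (x : ℝ²) :
    x = ∑ a, ((1 + 2 * ⟪p a, x⟫) / 3) • p a := by
  have hx := h.sum_inner_eq_zero x
  rw [Fin.sum_univ_three] at hx
  have hperp : ∀ a, ⟪p a, x - ∑ b, ((1 + 2 * ⟪p b, x⟫) / 3) • p b⟫ = 0 := by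
    intro a
    fin_cases a <;> simp [Fin.sum_univ_three, inner_sub_right, inner_add_right,
      real_inner_smul_right, h.norm_eq_one, h.inner_eq_neg_half] <;> linarith
  exact sub_eq_zero.mp <| eq_zero_of_inner_eq_of_affineSpan_eq_top h.affineSpan_eq_top
    fun a b => by rw [hperp, hperp]

theorem convexHull_eq (h : InscribedEquilateral p) :
    convexHull ℝ (range p) = tangentPolygon (range p) := by
  refine subset_antisymm (convexHull_min ?_ (convex_tangentPolygon _)) fun x hx => ?_
  · rintro _ ⟨a, rfl⟩ _ ⟨b, rfl⟩
    rcases eq_or_ne b a with rfl | hba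
    · rw [h.inner_self]; norm_num
    · rw [h.inner_eq_neg_half hba]
  · rw [h.eq_sum_smul x]
    refine (convex_convexHull ℝ _).sum_mem (fun a _ => ?_) (h.sum_weights_eq_one x)
      fun a _ => subset_convexHull ℝ _ (mem_range_self a)
    have := hx _ (mem_range_self a)
    linarith

theorem convexHull_subset_closedBall (h : InscribedEquilateral p) :
    convexHull ℝ (range p) ⊆ closedBall 0 1 :=
  convexHull_min (range_subset_iff.mpr fun a => by simp [h.norm_eq_one]) (convex_closedBall 0 1)

theorem mem_range_of_norm_eq_one (h : InscribedEquilateral p) (hx : x ∈ convexHull ℝ (range p))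
    (hx1 : ‖x‖ = 1) : x ∈ range p :=
  extremePoints_convexHull_subset <|
    inter_extremePoints_subset_extremePoints_of_subset h.convexHull_subset_closedBall
      ⟨hx, StrictConvexSpace.sphere_subset_extremePoints_closedBall 0 one_ne_zero (by simpa)⟩

theorem exists_eq_of_inner_eq_neg_half (h : InscribedEquilateral p) (hab : a ≠ b)
    (ha : ⟪p a, x⟫ = -(1 / 2)) (hb : ⟪p b, x⟫ = -(1 / 2)) : ∃ c, x = p c := by
  obtain ⟨c, hca, hcb⟩ := exists_ne_and_ne_fin_three a b
  refine ⟨c, sub_eq_zero.mp (eq_zero_of_inner_eq_zero_of_linearIndependent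
    (linearIndependent_pair_of_inner_eq (by norm_num) (h.1.injective.ne hab) ha hb) ?_ ?_)⟩
  · rw [inner_sub_right, ha, h.inner_eq_neg_half hca.symm, sub_self]
  · rw [inner_sub_right, hb, h.inner_eq_neg_half hcb.symm, sub_self]

theorem range_subset_of_apply_eq (h : InscribedEquilateral p) {q : Fin 3 → ℝ²}
    (hq : InscribedEquilateral q) (hab : p a = q b) : range q ⊆ range p := by
  rintro _ ⟨c, rfl⟩
  rcases eq_or_ne c b with rfl | hcb
  · exact ⟨a, hab⟩
  obtain ⟨a₁, ha₁, -⟩ := exists_ne_and_ne_fin_three a a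
  obtain ⟨a₂, ha₂, ha₂₁⟩ := exists_ne_and_ne_fin_three a a₁
  rcases eq_or_eq_of_inner_eq (x := p a) (by norm_num) (h.norm_eq_one a₁) (h.norm_eq_one a₂)
    (hq.norm_eq_one c) (h.1.injective.ne ha₂₁.symm) (h.inner_eq_neg_half ha₁)
    (h.inner_eq_neg_half ha₂) (by rw [hab]; exact hq.inner_eq_neg_half hcb) with h' | h'
  · exact ⟨a₁, h'.symm⟩
  · exact ⟨a₂, h'.symm⟩

theorem segment_eq_convexHull_inter (h : InscribedEquilateral p) (hab : a ≠ b) (hca : c ≠ a)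
    (hcb : c ≠ b) :
    segment ℝ (p a) (p b) = convexHull ℝ (range p) ∩ {x | ⟪p c, x⟫ = -(1 / 2)} := by
  refine subset_antisymm (fun x hx => ⟨segment_subset_convexHull (mem_range_self a)
    (mem_range_self b) hx, ?_⟩) ?_
  · rintro x ⟨hx, hxc : ⟪p c, x⟫ = -(1 / 2)⟩
    rw [h.convexHull_eq] at hx
    have hw := h.sum_weights_eq_one x
    have hsum := h.eq_sum_smul x
    rw [sum_fin_three_of_ne _ hab hca.symm hcb.symm, hxc] at hw hsum
    rw [show ((1 + 2 * -(1 / 2)) / 3 : ℝ) = 0 by norm_num, zero_smul, add_zero] at hsum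
    refine ⟨_, _, ?_, ?_, by linarith, hsum.symm⟩
    · have := hx _ (mem_range_self a); linarith
    · have := hx _ (mem_range_self b); linarith
  · obtain ⟨s, t, -, -, hst, rfl⟩ := hx
    simp only [mem_ofPred_eq, inner_add_right, real_inner_smul_right, h.inner_eq_neg_half hca,
      h.inner_eq_neg_half hcb]
    linear_combination -(1 / 2 : ℝ) * hst

theorem mem_frontier_iff (h : InscribedEquilateral p) (hx : x ∈ convexHull ℝ (range p)) :
    x ∈ frontier (convexHull ℝ (range p)) ↔ ∃ a, ⟪p a, x⟫ = -(1 / 2) := by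
  have h0 : (0 : ℝ²) ∉ range p := fun ⟨a, ha⟩ => by simpa [ha] using h.norm_eq_one a
  rw [h.convexHull_eq] at hx ⊢
  rw [frontier_tangentPolygon (finite_range p) h0]
  simp [hx, activeNormals, Set.Nonempty]

end InscribedEquilateral

section Configuration

variable {ι : Type*} {v : ι → Fin 3 → ℝ²}

theorem injective_uncurry_of_convexHull_ne (hins : ∀ i, InscribedEquilateral (v i))
    (hdist : ∀ i j, i ≠ j → convexHull ℝ (range (v i)) ≠ convexHull ℝ (range (v j))) :
    Injective (uncurry v) := by
  rintro ⟨i, a⟩ ⟨j, b⟩ (hab : v i a = v j b)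
  by_cases hij : i = j
  · subst hij
    rw [(hins i).1.injective hab]
  · exact absurd (congrArg (convexHull ℝ) (subset_antisymm
      ((hins j).range_subset_of_apply_eq (hins i) hab.symm)
      ((hins i).range_subset_of_apply_eq (hins j) hab))) (hdist i j hij)

theorem iInter_convexHull_eq_tangentPolygon (hins : ∀ i, InscribedEquilateral (v i)) :
    ⋂ i, convexHull ℝ (range (v i)) = tangentPolygon (range (uncurry v)) := by
  ext x
  simp only [mem_iInter, (hins _).convexHull_eq, tangentPolygon, mem_ofPred_eq, forall_mem_range,
    Prod.forall, uncurry_apply_pair]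

theorem isBounded_tangentPolygon (hins : ∀ i, InscribedEquilateral (v i)) (i : ι) :
    Bornology.IsBounded (tangentPolygon (range (uncurry v))) := by
  rw [← iInter_convexHull_eq_tangentPolygon hins]
  exact isBounded_closedBall.subset
    ((iInter_subset _ i).trans (hins i).convexHull_subset_closedBall)

theorem norm_eq_one_of_mem_range_uncurry (hins : ∀ i, InscribedEquilateral (v i)) :
    ∀ u ∈ range (uncurry v), ‖u‖ = 1 := by
  rintro _ ⟨⟨i, a⟩, rfl⟩
  exact (hins i).norm_eq_one a

theorem eq_of_inner_eq_neg_half_of_mem_convexHull (hins : ∀ i, InscribedEquilateral (v i))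
    (hinj : Injective (uncurry v)) {i j : ι} (hij : i ≠ j) {a b : Fin 3}
    {x : ℝ²} (hx : x ∈ convexHull ℝ (range (v j))) (ha : ⟪v i a, x⟫ = -(1 / 2))
    (hb : ⟪v i b, x⟫ = -(1 / 2)) : a = b := by
  by_contra hab
  obtain ⟨c, rfl⟩ := (hins i).exists_eq_of_inner_eq_neg_half hab ha hb
  obtain ⟨b', hb'⟩ := (hins j).mem_range_of_norm_eq_one hx ((hins i).norm_eq_one c)
  exact hij (congrArg Prod.fst (hinj (a₁ := (j, b')) (a₂ := (i, c)) hb')).symm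

variable [Finite ι]

theorem ncard_extremePoints_inter_segment (hins : ∀ i, InscribedEquilateral (v i)) (i : ι)
    {a b : Fin 3} (hab : a ≠ b) :
    ((tangentPolygon (range (uncurry v))).extremePoints ℝ ∩
      segment ℝ (v i a) (v i b)).ncard = 2 := by
  obtain ⟨c, hca, hcb⟩ := exists_ne_and_ne_fin_three a b
  have hK : tangentPolygon (range (uncurry v)) ⊆ convexHull ℝ (range (v i)) := by
    rw [← iInter_convexHull_eq_tangentPolygon hins]; exact iInter_subset _ i
  rw [(hins i).segment_eq_convexHull_inter hab hca hcb, ← inter_assoc, inter_eq_left.mpr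
    (extremePoints_subset.trans hK)]
  exact ncard_extremePoints_inter_eq_two (finite_range _) (norm_eq_one_of_mem_range_uncurry hins)
    (isBounded_tangentPolygon hins i) ⟨(i, c), rfl⟩

theorem ncard_setOf_mem_frontier [Nontrivial ι] (hins : ∀ i, InscribedEquilateral (v i))
    (hinj : Injective (uncurry v)) {x : ℝ²}
    (hx : x ∈ (tangentPolygon (range (uncurry v))).extremePoints ℝ) :
    {i | x ∈ frontier (convexHull ℝ (range (v i)))}.ncard = 2 := by
  have hK : ∀ i, x ∈ convexHull ℝ (range (v i)) := fun i => by
    rw [← iInter_convexHull_eq_tangentPolygon hins] at hx; exact mem_iInter.mp hx.1 i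
  obtain ⟨u₁, u₂, hne, hA⟩ := Set.ncard_eq_two.mp
    (ncard_activeNormals (finite_range _) (norm_eq_one_of_mem_range_uncurry hins) hx)
  have hact : ∀ i a, ⟪v i a, x⟫ = -(1 / 2) ↔ v i a = u₁ ∨ v i a = u₂ := fun i a => by
    simpa [activeNormals] using Set.ext_iff.mp hA (v i a)
  have hu₁ : u₁ ∈ activeNormals _ x := hA ▸ mem_insert u₁ {u₂}
  have hu₂ : u₂ ∈ activeNormals _ x := hA ▸ mem_insert_of_mem u₁ (mem_singleton u₂)
  obtain ⟨⟨i₁, a₁⟩, rfl⟩ := hu₁.1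
  obtain ⟨⟨i₂, a₂⟩, rfl⟩ := hu₂.1
  have hi : i₁ ≠ i₂ := by
    rintro rfl
    obtain ⟨j, hj⟩ := exists_ne i₁
    obtain rfl := eq_of_inner_eq_neg_half_of_mem_convexHull hins hinj hj.symm (hK j) hu₁.2 hu₂.2
    exact hne rfl
  refine Set.ncard_eq_two.mpr ⟨i₁, i₂, hi, Set.ext fun j => ?_⟩
  simp only [mem_ofPred_eq, (hins j).mem_frontier_iff (hK j), hact, mem_insert_iff,
    mem_singleton_iff]
  constructor
  · rintro ⟨a, h | h⟩
    · exact Or.inl (congrArg Prod.fst (hinj (a₁ := (j, a)) (a₂ := (i₁, a₁)) h))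
    · exact Or.inr (congrArg Prod.fst (hinj (a₁ := (j, a)) (a₂ := (i₂, a₂)) h))
  · rintro (rfl | rfl)
    · exact ⟨a₁, Or.inl rfl⟩
    · exact ⟨a₂, Or.inr rfl⟩

theorem ncard_extremePoints_tangentPolygon_range_uncurry [Nonempty ι]
    (hins : ∀ i, InscribedEquilateral (v i)) (hinj : Injective (uncurry v)) :
    ((tangentPolygon (range (uncurry v))).extremePoints ℝ).ncard = 3 * Nat.card ι := by
  rw [ncard_extremePoints_tangentPolygon (finite_range _) (norm_eq_one_of_mem_range_uncurry hins)
    (isBounded_tangentPolygon hins (Classical.arbitrary ι)), ncard_range_of_injective hinj,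
    Nat.card_prod, Nat.card_eq_fintype_card (α := Fin 3), Fintype.card_fin, mul_comm]

end Configuration

/-- with T₁, …, Tₙ (n ≥ 2) distinct inscribed equilateral triangles and S
the vertex set of ∩ᵢ Tᵢ: every edge of every Tᵢ contains exactly 2 points of S, every
point of S lies on the boundary of exactly two of the triangles, and |S| = 3n. -/
theorem stmt_14 {n : ℕ} (hn : 2 ≤ n) (v : Fin n → Fin 3 → EuclideanSpace ℝ (Fin 2))
    (hins : ∀ i, InscribedEquilateral (v i))
    (hdist : ∀ i j, i ≠ j →
      convexHull ℝ (Set.range (v i)) ≠ convexHull ℝ (Set.range (v j)))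
    (S : Set (EuclideanSpace ℝ (Fin 2)))
    (hS : S = Set.extremePoints ℝ (⋂ i, convexHull ℝ (Set.range (v i)))) :
    (∀ i, ∀ a b : Fin 3, a ≠ b → (S ∩ segment ℝ (v i a) (v i b)).ncard = 2) ∧
    (∀ x ∈ S, {i : Fin n | x ∈ frontier (convexHull ℝ (Set.range (v i)))}.ncard = 2) ∧
    S.ncard = 3 * n := by
  have : Nontrivial (Fin n) := Fin.nontrivial_iff_two_le.mpr hn
  have hinj := injective_uncurry_of_convexHull_ne hins hdist
  rw [iInter_convexHull_eq_tangentPolygon hins] at hS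
  subst hS
  exact ⟨fun i a b hab => ncard_extremePoints_inter_segment hins i hab,
    fun x hx => ncard_setOf_mem_frontier hins hinj hx,
    by rw [ncard_extremePoints_tangentPolygon_range_uncurry hins hinj, Nat.card_fin]⟩
end

section
/- Let M be a rank-r real matrix factored as M = UV where U has r columns and V has r rows. Then M has nonnegative rank equal to r if and only if there exists an invertible r×r matrix Q such that U Q⁻¹ and Q V are both entrywise nonnegative. -/
/-- Full row rank implies a right inverse exists. -/
lemma exists_right_inverse_aux {r n : ℕ} (W : Matrix (Fin r) (Fin n) ℝ)
    (h : W.rank = r) : ∃ W' : Matrix (Fin n) (Fin r) ℝ, W * W' = 1 := by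
  have hrange : LinearMap.range W.mulVecLin = ⊤ := by
    apply Submodule.eq_top_of_finrank_eq
    rw [← Matrix.rank, h, Module.finrank_fintype_fun_eq_card, Fintype.card_fin]
  obtain ⟨g, hg⟩ := W.mulVecLin.exists_rightInverse_of_surjective hrange
  refine ⟨LinearMap.toMatrix' g, ?_⟩
  have h1 : (W * LinearMap.toMatrix' g).mulVecLin = (1 : Matrix (Fin r) (Fin r) ℝ).mulVecLin := by
    rw [Matrix.mulVecLin_mul, Matrix.mulVecLin_one,
      ← Matrix.toLin'_apply' (LinearMap.toMatrix' g), Matrix.toLin'_toMatrix', hg]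
  have hinj : Function.Injective
      (Matrix.mulVecLin : Matrix (Fin r) (Fin r) ℝ → _) := by
    intro A B hAB
    have := congrArg LinearMap.toMatrix'
      (show Matrix.toLin' A = Matrix.toLin' B from hAB)
    simpa using this
  exact hinj h1

/-- Full column rank implies `mulVecLin` is injective. -/
lemma mulVecLin_injective_aux {m r : ℕ} (U : Matrix (Fin m) (Fin r) ℝ)
    (h : U.rank = r) : Function.Injective U.mulVecLin := by
  rw [← LinearMap.ker_eq_bot]
  have := U.mulVecLin.finrank_range_add_finrank_ker
  rw [← Matrix.rank, h, Module.finrank_fintype_fun_eq_card, Fintype.card_fin] at this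
  have hker : Module.finrank ℝ (LinearMap.ker U.mulVecLin) = 0 := by omega
  exact Submodule.finrank_eq_zero.mp hker

/-- Left cancellation for matrices with full column rank. -/
lemma mul_left_cancel_aux {m r n : ℕ} (U : Matrix (Fin m) (Fin r) ℝ)
    (h : U.rank = r) {B C : Matrix (Fin r) (Fin n) ℝ} (hBC : U * B = U * C) : B = C := by
  have hinj := mulVecLin_injective_aux U h
  ext k j
  have hcol : U.mulVecLin (fun k => B k j) = U.mulVecLin (fun k => C k j) := by
    ext i
    have := congrFun (congrFun hBC i) j
    simpa [Matrix.mul_apply, Matrix.mulVecLin_apply, Matrix.mulVec, dotProduct] using this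
  exact congrFun (hinj hcol) k

/-- Vavasis: if the nonnegative matrix M of rank r factors as M = U * V
with inner dimension r, then rank⁺(M) = r iff there is an invertible r×r matrix Q with
U * Q⁻¹ and Q * V entrywise nonnegative. -/
theorem stmt_15 {m n r : ℕ} (M : Matrix (Fin m) (Fin n) ℝ) (hM : ∀ i j, 0 ≤ M i j)
    (hrank : M.rank = r)
    (U : Matrix (Fin m) (Fin r) ℝ) (V : Matrix (Fin r) (Fin n) ℝ) (hfac : M = U * V) :
    nrank M = r ↔ ∃ Q : Matrix (Fin r) (Fin r) ℝ, IsUnit Q.det ∧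
      (∀ i k, 0 ≤ (U * Q⁻¹) i k) ∧ (∀ k j, 0 ≤ (Q * V) k j) := by
  set S := {k : ℕ | ∃ (A : Matrix (Fin m) (Fin k) ℝ) (W : Matrix (Fin k) (Fin n) ℝ),
    (∀ i l, 0 ≤ A i l) ∧ (∀ l j, 0 ≤ W l j) ∧ M = A * W} with hSdef
  have hnrank : nrank M = sInf S := rfl
  have hSne : S.Nonempty := by
    refine ⟨n, M, 1, hM, fun l j => ?_, (Matrix.mul_one M).symm⟩
    rw [Matrix.one_apply]
    split <;> norm_num
  have hlb : ∀ k ∈ S, r ≤ k := by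
    rintro k ⟨A, W, _, _, hAW⟩
    calc r = M.rank := hrank.symm
    _ = (A * W).rank := by rw [hAW]
    _ ≤ W.rank := Matrix.rank_mul_le_right A W
    _ ≤ Fintype.card (Fin k) := W.rank_le_card_height
    _ = k := Fintype.card_fin k
  constructor
  · intro h
    have hrS : r ∈ S := by
      have := Nat.sInf_mem hSne
      rwa [← hnrank, h] at this
    obtain ⟨A, W, hA, hW, hAW⟩ := hrS
    -- ranks
    have hWrank : W.rank = r := by
      refine le_antisymm ?_ ?_
      · calc W.rank ≤ Fintype.card (Fin r) := W.rank_le_card_height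
          _ = r := Fintype.card_fin r
      · calc r = M.rank := hrank.symm
          _ = (A * W).rank := by rw [hAW]
          _ ≤ W.rank := Matrix.rank_mul_le_right A W
    have hArank : A.rank = r := by
      refine le_antisymm ?_ ?_
      · calc A.rank ≤ Fintype.card (Fin r) := A.rank_le_card_width
          _ = r := Fintype.card_fin r
      · calc r = M.rank := hrank.symm
          _ = (A * W).rank := by rw [hAW]
          _ ≤ A.rank := Matrix.rank_mul_le_left A W
    have hUrank : U.rank = r := by
      refine le_antisymm ?_ ?_
      · calc U.rank ≤ Fintype.card (Fin r) := U.rank_le_card_width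
          _ = r := Fintype.card_fin r
      · calc r = M.rank := hrank.symm
          _ = (U * V).rank := by rw [hfac]
          _ ≤ U.rank := Matrix.rank_mul_le_left U V
    obtain ⟨W', hWW'⟩ := exists_right_inverse_aux W hWrank
    set X := V * W' with hXdef
    have hUX : U * X = A := by
      calc U * X = (U * V) * W' := by rw [hXdef, Matrix.mul_assoc]
        _ = (A * W) * W' := by rw [← hfac, hAW]
        _ = A * (W * W') := by rw [Matrix.mul_assoc]
        _ = A := by rw [hWW', Matrix.mul_one]
    have hXrank : X.rank = r := by
      refine le_antisymm ?_ ?_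
      · calc X.rank ≤ Fintype.card (Fin r) := X.rank_le_card_width
          _ = r := Fintype.card_fin r
      · calc r = A.rank := hArank.symm
          _ = (U * X).rank := by rw [hUX]
          _ ≤ X.rank := Matrix.rank_mul_le_right U X
    have hXunit : IsUnit X := by
      rw [← Matrix.mulVec_injective_iff_isUnit]
      exact mulVecLin_injective_aux X hXrank
    have hXdet : IsUnit X.det := (Matrix.isUnit_iff_isUnit_det X).mp hXunit
    have hV : V = X * W := by
      apply mul_left_cancel_aux U hUrank
      calc U * V = M := hfac.symm
        _ = A * W := hAW
        _ = (U * X) * W := by rw [hUX]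
        _ = U * (X * W) := by rw [Matrix.mul_assoc]
    refine ⟨X⁻¹, X.isUnit_nonsing_inv_det hXdet, ?_, ?_⟩
    · rw [Matrix.nonsing_inv_nonsing_inv X hXdet, hUX]
      exact hA
    · rw [hV, ← Matrix.mul_assoc, Matrix.nonsing_inv_mul X hXdet, Matrix.one_mul]
      exact hW
  · rintro ⟨Q, hQ, h1, h2⟩
    have hrS : r ∈ S := by
      refine ⟨U * Q⁻¹, Q * V, h1, h2, ?_⟩
      calc M = U * V := hfac
        _ = U * ((Q⁻¹ * Q) * V) := by rw [Matrix.nonsing_inv_mul Q hQ, Matrix.one_mul]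
        _ = (U * Q⁻¹) * (Q * V) := by rw [Matrix.mul_assoc, Matrix.mul_assoc]
    rw [hnrank]
    exact le_antisymm (Nat.sInf_le hrS) (le_csInf hSne hlb)
end
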